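/- arXiv:1909.08334 — 5 statements merged into one kernel-verified Lean document; each statement's English description precedes it below -/
import Mathlib

section
/- Let n ≥ 1, ν ∈ ℤ, let g ∈ SU(n,n) have n×n blocks g = (A B; C D), and let U ∈ M(n,ℂ). Put X₀ = (0 U; U* 0) and Y₀ = (0 iU; −iU* 0) (both lie in su(n,n)). Let h : SU(n,n) → ℂ be h(x) = (det D_x)^{−ν}, where D_x denotes the lower-right n×n block of x (which is invertible for x ∈ SU(n,n)). Then the functions t ↦ h(g·exp(tX₀)) and t ↦ h(g·exp(tY₀)) (exp = matrix exponential; g·exp(tX₀), g·exp(tY₀) ∈ SU(n,n) for all real t) are differentiable at t = 0 and: (i) ½·(d/dt)|_{t=0} h(g·exp(tX₀)) − (i/2)·(d/dt)|_{t=0} h(g·exp(tY₀)) = −ν·(det D)^{−ν}·tr(D^{−1}CU); (ii) ½·(d/dt)|_{t=0} h(g·exp(tX₀)) + (i/2)·(d/dt)|_{t=0} h(g·exp(tY₀)) = 0. -/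
open MeasureTheory Complex Matrix Filter
open scoped ENNReal Real ComplexOrder

noncomputable section

/-- The space of `n × n` complex matrices. -/
abbrev Mat (n : ℕ) := Matrix (Fin n) (Fin n) ℂ

/-- The space of `2n × 2n` complex matrices, in `n × n` block form. -/
abbrev BMat (n : ℕ) := Matrix (Fin n ⊕ Fin n) (Fin n ⊕ Fin n) ℂ

/-- The matrix `J = diag(I_n, −I_n)`. -/
def Jmat (n : ℕ) : BMat n := Matrix.fromBlocks 1 0 0 (-1)

/-- The group `SU(n,n)`. -/
def SUnn (n : ℕ) : Set (BMat n) := {g | g.det = 1 ∧ gᴴ * Jmat n * g = Jmat n}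

/-- The Lie algebra `su(n,n)`. -/
def sunn (n : ℕ) : Set (BMat n) := {X | Xᴴ * Jmat n + Jmat n * X = 0 ∧ X.trace = 0}

/-- The matrix exponential `exp A = Σ Aᵏ/k!`. -/
def matExp (n : ℕ) (A : BMat n) : BMat n := ∑' k : ℕ, ((Nat.factorial k : ℂ))⁻¹ • A ^ k

/-! The curves are restrictions of holomorphic functions of `z ∈ ℂ`, and by Jacobi's formula
`d(det M) = tr(adj M · dM)` the derivative of `z ↦ det((g exp(zX))₂₂)^(-ν)` at `0` is
`-ν (det D)^(-ν) tr(D⁻¹ (gX)₂₂)`; here `D` is invertible because `g*Jg = J` forces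
`D*D = 1 + B*B`. For `X = (0 V; V* 0)` one has `(gX)₂₂ = CV`, and `Y₀` is that matrix for `V = iU`,
so the two derivatives are `a` and `ia` with `a = -ν (det D)^(-ν) tr(D⁻¹CU)`, whence
`½a ∓ (i/2)(ia)` equals `a`, respectively `0`. -/

namespace Matrix

variable {𝕜 : Type*} {ι : Type*} [Fintype ι] [DecidableEq ι]

theorem det_updateRow_eq_sum_adjugate_mul {R : Type*} [CommRing R] (A : Matrix ι ι R) (i : ι)
    (b : ι → R) :
    (A.updateRow i b).det = ∑ j, A.adjugate j i * b j := by
  rw [← cramer_transpose_apply, cramer_eq_adjugate_mulVec, ← adjugate_transpose]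
  rfl

theorem sum_det_updateRow_eq_trace_adjugate_mul {R : Type*} [CommRing R] (A B : Matrix ι ι R) :
    ∑ i, (A.updateRow i (B i)).det = (A.adjugate * B).trace := by
  simp only [det_updateRow_eq_sum_adjugate_mul, trace, diag, mul_apply]
  exact Finset.sum_comm

variable (𝕜 ι) in
def detRowContinuousMultilinear [NontriviallyNormedField 𝕜] :
    ContinuousMultilinearMap 𝕜 (fun _ : ι => ι → 𝕜) 𝕜 :=
  { (detRowAlternating : (ι → 𝕜) [⋀^ι]→ₗ[𝕜] 𝕜).toMultilinearMap with
    cont := continuous_id.matrix_det }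

theorem hasDerivAt_det [NontriviallyNormedField 𝕜] {M : 𝕜 → Matrix ι ι 𝕜} {M' : Matrix ι ι 𝕜}
    {z : 𝕜} (h : ∀ i j, HasDerivAt (fun w => M w i j) (M' i j) z) :
    HasDerivAt (fun w => (M w).det) ((M z).adjugate * M').trace z := by
  have hrow (i : ι) : HasFDerivAt (fun w => M w i) ((1 : 𝕜 →L[𝕜] 𝕜).smulRight (M' i)) z :=
    (hasDerivAt_pi.2 (h i)).hasFDerivAt
  refine (HasFDerivAt.multilinear_comp (detRowContinuousMultilinear 𝕜 ι) hrow).hasDerivAt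
    |>.congr_deriv ?_
  rw [← sum_det_updateRow_eq_trace_adjugate_mul]
  simp only [_root_.sum_apply, ContinuousLinearMap.comp_apply,
    ContinuousMultilinearMap.toContinuousLinearMap_apply, ContinuousLinearMap.smulRight_apply,
    one_apply_eq_self, one_smul]
  rfl

-- `exp` does not depend on a norm; the operator norm only supplies the Banach algebra structure.
open scoped Norms.Operator in
theorem hasDerivAt_mul_exp_smul_apply [RCLike 𝕜] (g X : Matrix ι ι 𝕜) (p q : ι) :
    HasDerivAt (fun z : 𝕜 => (g * NormedSpace.exp (z • X)) p q) ((g * X) p q) 0 := by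
  have hexp := (hasDerivAt_exp_smul_const (𝕂 := 𝕜) X 0).const_mul g
  rw [zero_smul, NormedSpace.exp_zero, one_mul] at hexp
  exact (entryLinearMap 𝕜 𝕜 p q).toContinuousLinearMap.hasFDerivAt.comp_hasDerivAt 0 hexp

theorem hasDerivAt_det_toBlocks₂₂_mul_exp_smul_zpow [RCLike 𝕜] {m : Type*} [Fintype m]
    [DecidableEq m] (k : ℤ) (g X : Matrix (m ⊕ ι) (m ⊕ ι) 𝕜) (hD : g.toBlocks₂₂.det ≠ 0) :
    HasDerivAt (fun z : 𝕜 => (g * NormedSpace.exp (z • X)).toBlocks₂₂.det ^ k)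
      (k * g.toBlocks₂₂.det ^ k * (g.toBlocks₂₂⁻¹ * (g * X).toBlocks₂₂).trace) 0 := by
  set D := g.toBlocks₂₂
  have hM0 : (g * NormedSpace.exp ((0 : 𝕜) • X)).toBlocks₂₂ = D := by
    rw [zero_smul, NormedSpace.exp_zero, mul_one]
  have hdet := hasDerivAt_det (M := fun z : 𝕜 => (g * NormedSpace.exp (z • X)).toBlocks₂₂)
    (M' := (g * X).toBlocks₂₂)
    fun i j => hasDerivAt_mul_exp_smul_apply g X (.inr i) (.inr j)
  have hadj : D.adjugate = D.det • D⁻¹ := by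
    rw [inv_def, Ring.inverse_eq_inv', smul_smul, mul_inv_cancel₀ hD, one_smul]
  refine ((hasDerivAt_zpow k D.det (.inl hD)).comp_of_eq 0 hdet (by rw [hM0])).congr_deriv ?_
  rw [hM0, hadj, smul_mul, trace_smul, smul_eq_mul, zpow_sub_one₀ hD]
  field_simp

theorem toBlocks₂₂_mul_fromBlocks_zero {R m : Type*} [Fintype m] [CommRing R]
    (g : Matrix (m ⊕ ι) (m ⊕ ι) R) (V : Matrix m ι R) (W : Matrix ι m R) :
    (g * fromBlocks 0 V W 0).toBlocks₂₂ = g.toBlocks₂₁ * V := by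
  conv_lhs => rw [← fromBlocks_toBlocks g]
  simp [fromBlocks_multiply]

theorem toBlocks₂₂_conjTranspose_mul_self [RCLike 𝕜] {m : Type*} [Fintype m] [DecidableEq m]
    (g : Matrix (m ⊕ ι) (m ⊕ ι) 𝕜)
    (hg : gᴴ * fromBlocks 1 0 0 (-1) * g = fromBlocks 1 0 0 (-1)) :
    g.toBlocks₂₂ᴴ * g.toBlocks₂₂ = 1 + g.toBlocks₁₂ᴴ * g.toBlocks₁₂ := by
  rw [← fromBlocks_toBlocks g] at hg
  have h22 := congrArg toBlocks₂₂ hg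
  simp only [fromBlocks_conjTranspose, fromBlocks_multiply, Matrix.mul_zero, add_zero,
    Matrix.mul_neg, Matrix.mul_one, zero_add, Matrix.neg_mul, toBlocks_fromBlocks₂₂] at h22
  linear_combination (norm := abel) -h22

theorem det_toBlocks₂₂_ne_zero [RCLike 𝕜] {m : Type*} [Fintype m] [DecidableEq m]
    (g : Matrix (m ⊕ ι) (m ⊕ ι) 𝕜)
    (hg : gᴴ * fromBlocks 1 0 0 (-1) * g = fromBlocks 1 0 0 (-1)) :
    g.toBlocks₂₂.det ≠ 0 := by
  have hpos : (g.toBlocks₂₂ᴴ * g.toBlocks₂₂).PosDef := by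
    rw [toBlocks₂₂_conjTranspose_mul_self g hg]
    exact PosDef.one.add_posSemidef (posSemidef_conjTranspose_mul_self _)
  intro h
  simpa [h] using hpos.det_pos.ne'

end Matrix

theorem matExp_eq_exp (n : ℕ) : matExp n = NormedSpace.exp := by
  rw [NormedSpace.exp_eq_tsum ℂ]
  rfl

theorem fromBlocks_zero_conjTranspose_mem_sunn {n : ℕ} (V : Mat n) :
    fromBlocks 0 V Vᴴ 0 ∈ sunn n := by
  refine ⟨?_, ?_⟩
  · simp [Jmat, fromBlocks_conjTranspose, fromBlocks_multiply, fromBlocks_add]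
  · simp [trace, Fintype.sum_sum_type]

theorem hasDerivAt_det_toBlocks₂₂_mul_matExp_zpow {n : ℕ} (ν : ℤ) {g : BMat n} (hg : g ∈ SUnn n)
    (V : Mat n) :
    HasDerivAt (fun t : ℝ =>
        ((g * matExp n ((t : ℂ) • fromBlocks 0 V Vᴴ 0)).toBlocks₂₂).det ^ (-ν))
      (-(ν : ℂ) * g.toBlocks₂₂.det ^ (-ν) * (g.toBlocks₂₂⁻¹ * g.toBlocks₂₁ * V).trace) 0 := by
  have hD : g.toBlocks₂₂.det ≠ 0 := det_toBlocks₂₂_ne_zero g hg.2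
  have h := hasDerivAt_det_toBlocks₂₂_mul_exp_smul_zpow (-ν) g (fromBlocks 0 V Vᴴ 0) hD
  rw [toBlocks₂₂_mul_fromBlocks_zero, ← Complex.ofReal_zero] at h
  simpa [matExp_eq_exp, Matrix.mul_assoc] using h.comp_ofReal

theorem statement5_general (n : ℕ) (ν : ℤ) (g : BMat n) (hg : g ∈ SUnn n) (U : Mat n) :
    Matrix.fromBlocks 0 U Uᴴ 0 ∈ sunn n ∧
    Matrix.fromBlocks 0 (Complex.I • U) (-(Complex.I • Uᴴ)) 0 ∈ sunn n ∧
    ∃ dX dY : ℂ,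
      HasDerivAt (fun t : ℝ =>
          ((g * matExp n ((t : ℂ) • Matrix.fromBlocks 0 U Uᴴ 0)).toBlocks₂₂).det ^ (-ν))
        dX 0 ∧
      HasDerivAt (fun t : ℝ =>
          ((g * matExp n ((t : ℂ) •
            Matrix.fromBlocks 0 (Complex.I • U) (-(Complex.I • Uᴴ)) 0)).toBlocks₂₂).det ^ (-ν))
        dY 0 ∧
      (1 / 2 : ℂ) * dX - (Complex.I / 2) * dY
        = -(ν : ℂ) * (g.toBlocks₂₂).det ^ (-ν)
            * Matrix.trace ((g.toBlocks₂₂)⁻¹ * g.toBlocks₂₁ * U) ∧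
      (1 / 2 : ℂ) * dX + (Complex.I / 2) * dY = 0 := by
  rw [show -(I • Uᴴ) = (I • U)ᴴ by simp [conjTranspose_smul]]
  have hX := hasDerivAt_det_toBlocks₂₂_mul_matExp_zpow ν hg U
  have hY := hasDerivAt_det_toBlocks₂₂_mul_matExp_zpow ν hg (I • U)
  rw [Matrix.mul_smul, trace_smul, smul_eq_mul] at hY
  set a := -(ν : ℂ) * g.toBlocks₂₂.det ^ (-ν) * (g.toBlocks₂₂⁻¹ * g.toBlocks₂₁ * U).trace
  refine ⟨fromBlocks_zero_conjTranspose_mem_sunn U, fromBlocks_zero_conjTranspose_mem_sunn _,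
    a, _, hX, hY, ?_, ?_⟩
  · linear_combination (-a / 2) * I_mul_I
  · linear_combination (a / 2) * I_mul_I

/-- Lemma 2.2: for `g = (A B; C D) ∈ SU(n,n)`, `U ∈ M(n,ℂ)`,
`X₀ = (0 U; U* 0)`, `Y₀ = (0 iU; −iU* 0)` (both in `su(n,n)`), and
`h(x) = (det D_x)^{−ν}`, the curves `t ↦ h(g exp(tX₀))` and `t ↦ h(g exp(tY₀))`
are differentiable at `t = 0`, with
`L⁺(U)h(g) = ½ d/dt h(g exp(tX₀)) − (i/2) d/dt h(g exp(tY₀)) = −ν (det D)^{−ν} tr(D⁻¹CU)` and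
`L⁻(Ū)h(g) = ½ d/dt h(g exp(tX₀)) + (i/2) d/dt h(g exp(tY₀)) = 0`. -/
theorem statement5 (n : ℕ) (hn : 1 ≤ n) (ν : ℤ) (g : BMat n) (hg : g ∈ SUnn n) (U : Mat n) :
    Matrix.fromBlocks 0 U Uᴴ 0 ∈ sunn n ∧
    Matrix.fromBlocks 0 (Complex.I • U) (-(Complex.I • Uᴴ)) 0 ∈ sunn n ∧
    ∃ dX dY : ℂ,
      HasDerivAt (fun t : ℝ =>
          ((g * matExp n ((t : ℂ) • Matrix.fromBlocks 0 U Uᴴ 0)).toBlocks₂₂).det ^ (-ν))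
        dX 0 ∧
      HasDerivAt (fun t : ℝ =>
          ((g * matExp n ((t : ℂ) •
            Matrix.fromBlocks 0 (Complex.I • U) (-(Complex.I • Uᴴ)) 0)).toBlocks₂₂).det ^ (-ν))
        dY 0 ∧
      (1 / 2 : ℂ) * dX - (Complex.I / 2) * dY
        = -(ν : ℂ) * (g.toBlocks₂₂).det ^ (-ν)
            * Matrix.trace ((g.toBlocks₂₂)⁻¹ * g.toBlocks₂₁ * U) ∧
      (1 / 2 : ℂ) * dX + (Complex.I / 2) * dY = 0 :=
  statement5_general n ν g hg U

end
end

section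
/- Let n ≥ 1, let g ∈ SU(n,n) have n×n blocks g = (A B; C D), and let X ∈ su(n,n) have n×n blocks X = (α β; γ δ). For t ∈ ℝ write g·exp(tX) = (A_t B_t; C_t D_t) in n×n blocks (exp = matrix exponential). Then D_t is invertible for all t (in particular near t = 0), the map t ↦ B_t D_t^{−1} is differentiable at t = 0 with B₀D₀^{−1} = BD^{−1}, and (d/dt)|_{t=0} (B_t D_t^{−1}) = (A*)^{−1} β D^{−1}; equivalently the derivative equals (A − BD^{−1}C) β D^{−1}, since A − BD^{−1}C = (A*)^{−1} for every g ∈ SU(n,n). -/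
/-! With `J = diag(1, -1)`, the condition `gᴴ J g = J` reads blockwise `AᴴA - CᴴC = 1`,
`AᴴB = CᴴD` and `DᴴD = 1 + BᴴB`. The last one makes `D` invertible, and the first two then give
`A - BD⁻¹C = (Aᴴ)⁻¹`. Since `XᴴJ = -JX`, `J` intertwines `X` and `-Xᴴ`, so `exp(tX)` preserves `J`
and every `g exp(tX)` has invertible lower-right block. Differentiating `B_t D_t⁻¹` at `0`, where
`g exp(tX)` has velocity `gX`, gives `(gX)₁₂D⁻¹ - BD⁻¹(gX)₂₂D⁻¹ = (A - BD⁻¹C) β D⁻¹`. -/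

open MeasureTheory Complex Matrix Filter
open scoped ENNReal Real ComplexOrder

noncomputable section

section BlockAlgebra

variable {l m n : Type*} [Fintype l] [Fintype m]

theorem Matrix.toBlocks₁₂_mul {R : Type*} [NonUnitalNonAssocSemiring R]
    (M N : Matrix (l ⊕ m) (l ⊕ m) R) :
    (M * N).toBlocks₁₂ = M.toBlocks₁₁ * N.toBlocks₁₂ + M.toBlocks₁₂ * N.toBlocks₂₂ := by
  ext i j
  simp [toBlocks₁₂, toBlocks₁₁, toBlocks₂₂, mul_apply, Fintype.sum_sum_type]

theorem Matrix.toBlocks₂₂_mul {R : Type*} [NonUnitalNonAssocSemiring R]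
    (M N : Matrix (l ⊕ m) (l ⊕ m) R) :
    (M * N).toBlocks₂₂ = M.toBlocks₂₁ * N.toBlocks₁₂ + M.toBlocks₂₂ * N.toBlocks₂₂ := by
  ext i j
  simp [toBlocks₁₂, toBlocks₂₁, toBlocks₂₂, mul_apply, Fintype.sum_sum_type]

theorem Matrix.conjTranspose_mul_fromBlocks_one_neg_one_mul [DecidableEq m] [DecidableEq n]
    [Fintype n] {R : Type*} [Ring R] [StarRing R] (h : Matrix (m ⊕ n) (m ⊕ n) R) :
    hᴴ * fromBlocks 1 0 0 (-1) * h =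
      fromBlocks (h.toBlocks₁₁ᴴ * h.toBlocks₁₁ - h.toBlocks₂₁ᴴ * h.toBlocks₂₁)
        (h.toBlocks₁₁ᴴ * h.toBlocks₁₂ - h.toBlocks₂₁ᴴ * h.toBlocks₂₂)
        (h.toBlocks₁₂ᴴ * h.toBlocks₁₁ - h.toBlocks₂₂ᴴ * h.toBlocks₂₁)
        (h.toBlocks₁₂ᴴ * h.toBlocks₁₂ - h.toBlocks₂₂ᴴ * h.toBlocks₂₂) := by
  conv_lhs => rw [← fromBlocks_toBlocks h, fromBlocks_conjTranspose]
  simp [fromBlocks_multiply, sub_eq_add_neg]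

end BlockAlgebra

theorem Matrix.isUnit_of_conjTranspose_mul_self_eq_one_add {𝕜 n m : Type*} [RCLike 𝕜]
    [Fintype n] [DecidableEq n] [Fintype m] {B : Matrix m n 𝕜} {D : Matrix n n 𝕜}
    (h : Dᴴ * D = 1 + Bᴴ * B) : IsUnit D := by
  have hpos : (Dᴴ * D).PosDef := h ▸ PosDef.one.add_posSemidef (posSemidef_conjTranspose_mul_self B)
  rw [isUnit_iff_isUnit_det]
  have := hpos.isUnit
  rw [isUnit_iff_isUnit_det, det_mul] at this
  exact isUnit_of_mul_isUnit_right this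

theorem Matrix.sub_mul_inv_mul_eq_inv_conjTranspose {R m n : Type*} [CommRing R] [StarRing R]
    [Fintype m] [DecidableEq m] [Fintype n] [DecidableEq n]
    {A : Matrix m m R} {B : Matrix m n R} {C : Matrix n m R} {D : Matrix n n R}
    (h₁₁ : Aᴴ * A - Cᴴ * C = 1) (h₁₂ : Aᴴ * B = Cᴴ * D) (hD : IsUnit D) :
    A - B * D⁻¹ * C = (Aᴴ)⁻¹ := by
  refine (inv_eq_right_inv ?_).symm
  calc Aᴴ * (A - B * D⁻¹ * C) = Aᴴ * A - Cᴴ * (D * D⁻¹) * C := by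
        simp only [Matrix.mul_sub, ← Matrix.mul_assoc, h₁₂]
    _ = 1 := by rw [mul_nonsing_inv _ ((isUnit_iff_isUnit_det D).mp hD), Matrix.mul_one, h₁₁]

theorem Matrix.conjTranspose_mul_mul_mul_eq_of_eq {R m : Type*} [Semiring R] [StarRing R]
    [Fintype m] {J g h : Matrix m m R} (hg : gᴴ * J * g = J) (hh : hᴴ * J * h = J) :
    (g * h)ᴴ * J * (g * h) = J := by
  calc (g * h)ᴴ * J * (g * h) = hᴴ * (gᴴ * J * g) * h := by
        simp only [conjTranspose_mul, Matrix.mul_assoc]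
    _ = J := by rw [hg, hh]

theorem Matrix.conjTranspose_exp_smul_mul_mul_exp {𝕜 m : Type*} [RCLike 𝕜] [Fintype m]
    [DecidableEq m] {X J : Matrix m m 𝕜} (h : Xᴴ * J + J * X = 0) (t : ℝ) :
    (NormedSpace.exp ((t : 𝕜) • X))ᴴ * J * NormedSpace.exp ((t : 𝕜) • X) = J := by
  have hsemi : SemiconjBy J ((t : 𝕜) • X) (-((t : 𝕜) • X)ᴴ) := by
    rw [SemiconjBy, conjTranspose_smul, RCLike.star_def, RCLike.conj_ofReal, ← neg_smul,
      smul_mul_assoc, mul_smul_comm, neg_smul, ← smul_neg]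
    exact congrArg _ (eq_neg_of_add_eq_zero_left ((add_comm _ _).trans h))
  rw [← exp_conjTranspose]
  -- Mathlib's exponential identities need a normed algebra; the `L^∞` operator norm makes
  -- matrices one without changing their topology.
  open scoped Norms.Operator in have key := hsemi.exp_neg_mul_mul_exp_eq_self
  rw [neg_neg] at key
  exact key

section FormPreserving

variable {𝕜 m n : Type*} [RCLike 𝕜] [Fintype m] [DecidableEq m] [Fintype n] [DecidableEq n]
  {h : Matrix (m ⊕ n) (m ⊕ n) 𝕜}

theorem Matrix.toBlocks_relations_of_conjTranspose_mul_mul_eq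
    (hh : hᴴ * fromBlocks 1 0 0 (-1) * h = fromBlocks 1 0 0 (-1)) :
    h.toBlocks₁₁ᴴ * h.toBlocks₁₁ - h.toBlocks₂₁ᴴ * h.toBlocks₂₁ = 1 ∧
      h.toBlocks₁₁ᴴ * h.toBlocks₁₂ = h.toBlocks₂₁ᴴ * h.toBlocks₂₂ ∧
      h.toBlocks₂₂ᴴ * h.toBlocks₂₂ = 1 + h.toBlocks₁₂ᴴ * h.toBlocks₁₂ := by
  rw [conjTranspose_mul_fromBlocks_one_neg_one_mul] at hh
  obtain ⟨h₁₁, h₁₂, -, h₂₂⟩ := fromBlocks_inj.mp hh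
  refine ⟨h₁₁, sub_eq_zero.mp h₁₂, ?_⟩
  rw [← neg_sub, neg_inj] at h₂₂
  exact sub_eq_iff_eq_add.mp h₂₂

theorem Matrix.isUnit_toBlocks₂₂_of_conjTranspose_mul_mul_eq
    (hh : hᴴ * fromBlocks 1 0 0 (-1) * h = fromBlocks 1 0 0 (-1)) : IsUnit h.toBlocks₂₂ :=
  isUnit_of_conjTranspose_mul_self_eq_one_add
    (toBlocks_relations_of_conjTranspose_mul_mul_eq hh).2.2

theorem Matrix.toBlocks₁₁_sub_eq_inv_conjTranspose_of_conjTranspose_mul_mul_eq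
    (hh : hᴴ * fromBlocks 1 0 0 (-1) * h = fromBlocks 1 0 0 (-1)) :
    h.toBlocks₁₁ - h.toBlocks₁₂ * h.toBlocks₂₂⁻¹ * h.toBlocks₂₁ = (h.toBlocks₁₁ᴴ)⁻¹ :=
  have ⟨h₁₁, h₁₂, _⟩ := toBlocks_relations_of_conjTranspose_mul_mul_eq hh
  sub_mul_inv_mul_eq_inv_conjTranspose h₁₁ h₁₂ (isUnit_toBlocks₂₂_of_conjTranspose_mul_mul_eq hh)

end FormPreserving

section Derivatives

open scoped Norms.Operator

variable {𝕜 m : Type*} [RCLike 𝕜] [Fintype m] [DecidableEq m] {t : ℝ}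

theorem HasDerivAt.matrix_inv {f : ℝ → Matrix m m 𝕜} {f' : Matrix m m 𝕜}
    (hf : HasDerivAt f f' t) (hunit : IsUnit (f t)) :
    HasDerivAt (fun s => (f s)⁻¹) (-((f t)⁻¹ * f' * (f t)⁻¹)) t := by
  obtain ⟨u, hu⟩ := hunit
  have hring := hasFDerivAt_ringInverse (𝕜 := ℝ) u
  rw [hu] at hring
  have hinv := hring.comp_hasDerivAt t hf
  simp only [Function.comp_def, ← nonsing_inv_eq_ringInverse, coe_units_inv] at hinv
  rw [← hu]
  exact hinv

theorem HasDerivAt.matrix_apply {l n : Type*} [Fintype l] [Fintype n]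
    {f : ℝ → Matrix l n 𝕜} {f' : Matrix l n 𝕜} (hf : HasDerivAt f f' t) (i : l) (j : n) :
    HasDerivAt (fun s => f s i j) (f' i j) t :=
  (entryLinearMap ℝ 𝕜 i j).toContinuousLinearMap.hasFDerivAt.comp_hasDerivAt t hf

theorem HasDerivAt.matrix_submatrix {l n l' n' : Type*} [Fintype l] [Fintype n] [Fintype l']
    [Fintype n'] {f : ℝ → Matrix l n 𝕜} {f' : Matrix l n 𝕜} (hf : HasDerivAt f f' t)
    (r : l' → l) (c : n' → n) :
    HasDerivAt (fun s => (f s).submatrix r c) (f'.submatrix r c) t :=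
  let submatrixₗ : Matrix l n 𝕜 →ₗ[ℝ] Matrix l' n' 𝕜 :=
    { toFun := fun M => M.submatrix r c, map_add' := fun _ _ => rfl, map_smul' := fun _ _ => rfl }
  submatrixₗ.toContinuousLinearMap.hasFDerivAt.comp_hasDerivAt t hf

theorem HasDerivAt.toBlocks₁₂_mul_inv_toBlocks₂₂ {M : ℝ → Matrix (m ⊕ m) (m ⊕ m) 𝕜}
    {M' : Matrix (m ⊕ m) (m ⊕ m) 𝕜} (hM : HasDerivAt M M' t) (hD : IsUnit (M t).toBlocks₂₂) :
    HasDerivAt (fun s => (M s).toBlocks₁₂ * ((M s).toBlocks₂₂)⁻¹)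
      (M'.toBlocks₁₂ * ((M t).toBlocks₂₂)⁻¹ -
        (M t).toBlocks₁₂ * (((M t).toBlocks₂₂)⁻¹ * M'.toBlocks₂₂ * ((M t).toBlocks₂₂)⁻¹)) t := by
  have hB : HasDerivAt (fun s => (M s).toBlocks₁₂) M'.toBlocks₁₂ t :=
    hM.matrix_submatrix Sum.inl Sum.inr
  have hD' : HasDerivAt (fun s => (M s).toBlocks₂₂) M'.toBlocks₂₂ t :=
    hM.matrix_submatrix Sum.inr Sum.inr
  rw [sub_eq_add_neg, ← mul_neg]
  exact hB.mul (hD'.matrix_inv hD)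

theorem hasDerivAt_mul_exp_ofReal_smul (g X : Matrix m m 𝕜) :
    HasDerivAt (fun s : ℝ => g * NormedSpace.exp ((s : 𝕜) • X))
      (g * (NormedSpace.exp ((t : 𝕜) • X) * X)) t := by
  simp only [← RCLike.real_smul_eq_coe_smul (K := 𝕜)]
  exact (hasDerivAt_exp_smul_const X t).const_mul g

end Derivatives

theorem Matrix.toBlocks₁₂_mul_inv_sub_eq_schur_mul {R m n : Type*} [CommRing R] [Fintype m]
    [Fintype n] [DecidableEq n] {g X : Matrix (m ⊕ n) (m ⊕ n) R} (hD : IsUnit g.toBlocks₂₂) :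
    (g * X).toBlocks₁₂ * g.toBlocks₂₂⁻¹ -
        g.toBlocks₁₂ * (g.toBlocks₂₂⁻¹ * (g * X).toBlocks₂₂ * g.toBlocks₂₂⁻¹) =
      (g.toBlocks₁₁ - g.toBlocks₁₂ * g.toBlocks₂₂⁻¹ * g.toBlocks₂₁) * X.toBlocks₁₂ *
        g.toBlocks₂₂⁻¹ := by
  have hDD : g.toBlocks₂₂⁻¹ * g.toBlocks₂₂ = 1 :=
    nonsing_inv_mul _ ((isUnit_iff_isUnit_det _).mp hD)
  rw [toBlocks₁₂_mul, toBlocks₂₂_mul]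
  simp only [Matrix.add_mul, Matrix.mul_add, Matrix.sub_mul, Matrix.mul_assoc]
  rw [← Matrix.mul_assoc g.toBlocks₂₂⁻¹ g.toBlocks₂₂, hDD, Matrix.one_mul]
  abel

theorem statement6_general (n : ℕ) (g : BMat n) (hg : g ∈ SUnn n)
    (X : BMat n) (hX : X ∈ sunn n) :
    (∀ t : ℝ, IsUnit ((g * matExp n ((t : ℂ) • X)).toBlocks₂₂)) ∧
    (g * matExp n (((0 : ℝ) : ℂ) • X)).toBlocks₁₂
        * ((g * matExp n (((0 : ℝ) : ℂ) • X)).toBlocks₂₂)⁻¹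
      = g.toBlocks₁₂ * (g.toBlocks₂₂)⁻¹ ∧
    (∀ i j : Fin n, HasDerivAt (fun t : ℝ =>
        ((g * matExp n ((t : ℂ) • X)).toBlocks₁₂
          * ((g * matExp n ((t : ℂ) • X)).toBlocks₂₂)⁻¹) i j)
      (((g.toBlocks₁₁ᴴ)⁻¹ * X.toBlocks₁₂ * (g.toBlocks₂₂)⁻¹) i j) 0) ∧
    g.toBlocks₁₁ - g.toBlocks₁₂ * (g.toBlocks₂₂)⁻¹ * g.toBlocks₂₁ = (g.toBlocks₁₁ᴴ)⁻¹ := by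
  rw [matExp_eq_exp]
  have hform (t : ℝ) : (g * NormedSpace.exp ((t : ℂ) • X))ᴴ * Jmat n *
      (g * NormedSpace.exp ((t : ℂ) • X)) = Jmat n :=
    conjTranspose_mul_mul_mul_eq_of_eq hg.2 (conjTranspose_exp_smul_mul_mul_exp hX.1 t)
  have hD : IsUnit g.toBlocks₂₂ := isUnit_toBlocks₂₂_of_conjTranspose_mul_mul_eq hg.2
  have hschur := toBlocks₁₁_sub_eq_inv_conjTranspose_of_conjTranspose_mul_mul_eq hg.2
  refine ⟨fun t => isUnit_toBlocks₂₂_of_conjTranspose_mul_mul_eq (hform t),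
    by simp, fun i j => ?_, hschur⟩
  have hderiv := (hasDerivAt_mul_exp_ofReal_smul (t := 0) g X).toBlocks₁₂_mul_inv_toBlocks₂₂
    (by simpa using hD)
  simp only [RCLike.ofReal_zero, zero_smul, NormedSpace.exp_zero, Matrix.mul_one,
    Matrix.one_mul] at hderiv
  rw [toBlocks₁₂_mul_inv_sub_eq_schur_mul hD, hschur] at hderiv
  exact hderiv.matrix_apply i j

/-- Lemma 2.3 (derivative of the orbit map at `0`): for `g = (A B; C D) ∈ SU(n,n)` and
`X = (α β; γ δ) ∈ su(n,n)`, writing `g exp(tX) = (A_t B_t; C_t D_t)`, the block `D_t` is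
invertible for all `t`, `B₀D₀⁻¹ = BD⁻¹`, the map `t ↦ B_t D_t⁻¹` is differentiable at
`t = 0` (entrywise) with derivative `(A*)⁻¹ β D⁻¹`, and `A − BD⁻¹C = (A*)⁻¹`. -/
theorem statement6 (n : ℕ) (hn : 1 ≤ n) (g : BMat n) (hg : g ∈ SUnn n)
    (X : BMat n) (hX : X ∈ sunn n) :
    (∀ t : ℝ, IsUnit ((g * matExp n ((t : ℂ) • X)).toBlocks₂₂)) ∧
    (g * matExp n (((0 : ℝ) : ℂ) • X)).toBlocks₁₂
        * ((g * matExp n (((0 : ℝ) : ℂ) • X)).toBlocks₂₂)⁻¹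
      = g.toBlocks₁₂ * (g.toBlocks₂₂)⁻¹ ∧
    (∀ i j : Fin n, HasDerivAt (fun t : ℝ =>
        ((g * matExp n ((t : ℂ) • X)).toBlocks₁₂
          * ((g * matExp n ((t : ℂ) • X)).toBlocks₂₂)⁻¹) i j)
      (((g.toBlocks₁₁ᴴ)⁻¹ * X.toBlocks₁₂ * (g.toBlocks₂₂)⁻¹) i j) 0) ∧
    g.toBlocks₁₁ - g.toBlocks₁₂ * (g.toBlocks₂₂)⁻¹ * g.toBlocks₂₁ = (g.toBlocks₁₁ᴴ)⁻¹ :=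
  statement6_general n g hg X hX

end
end

section
/- Let n ≥ 1, ν ∈ ℤ, λ ∈ ℂ. For every Z ∈ 𝒟, every U ∈ S, and all 1 ≤ i,j ≤ n, the holomorphic Wirtinger derivative of the Poisson kernel in the variable z_{ij} satisfies ∂P_{λ,ν}(·,U)/∂z_{ij}(Z) = P_{λ,ν}(Z,U) · [ ((iλ+n+ν)/2)·U*(I−ZU*)^{−1} − ((iλ+n−ν)/2)·Z*(I−ZZ*)^{−1} ]_{ji}, where [M]_{ji} denotes the (j,i) entry of the matrix M. -/
open MeasureTheory Complex Matrix Filter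
open scoped ENNReal Real ComplexOrder

noncomputable section

/-- The Shilov boundary `S = U(n)`, the group of `n × n` unitary matrices. -/
abbrev UG (n : ℕ) := Matrix.unitaryGroup (Fin n) ℂ

/-- The bounded domain `𝒟 = {Z : I − ZZ* positive definite}`. -/
def mBall (n : ℕ) : Set (Mat n) := {Z | ((1 : Mat n) - Z * Zᴴ).PosDef}

/-- The Poisson kernel `P_{λ,ν}(Z,U)`. -/
def pKer (n : ℕ) (ν : ℤ) (l : ℂ) (Z U : Mat n) : ℂ :=
  ((((1 : Mat n) - Z * Zᴴ).det / ((‖((1 : Mat n) - Z * Uᴴ).det‖ : ℝ) : ℂ) ^ 2)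
      ^ ((Complex.I * l + (n : ℂ) - (ν : ℂ)) / 2))
    * ((1 : Mat n) - Z * Uᴴ).det ^ (-ν)

/-- Directional derivative of `F` at `Z` in direction `E` (along a real parameter). -/
def dirDeriv (n : ℕ) (F : Mat n → ℂ) (E : Mat n) (Z : Mat n) : ℂ :=
  deriv (fun t : ℝ => F (Z + t • E)) 0

/-- Holomorphic Wirtinger derivative `∂F/∂z_{ab} = ½(∂F/∂x_{ab} − i ∂F/∂y_{ab})`. -/
def wHol (n : ℕ) (F : Mat n → ℂ) (a b : Fin n) (Z : Mat n) : ℂ :=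
  (1 / 2) * (dirDeriv n F (Matrix.single a b 1) Z
    - Complex.I * dirDeriv n F (Matrix.single a b Complex.I) Z)

/-- Antiholomorphic Wirtinger derivative `∂F/∂z̄_{ab} = ½(∂F/∂x_{ab} + i ∂F/∂y_{ab})`. -/
def wAnti (n : ℕ) (F : Mat n → ℂ) (a b : Fin n) (Z : Mat n) : ℂ :=
  (1 / 2) * (dirDeriv n F (Matrix.single a b 1) Z
    + Complex.I * dirDeriv n F (Matrix.single a b Complex.I) Z)

/-- `F` is smooth (in the `2n²` real coordinates) on a set `s` of matrices. -/
def RSmoothOn (n : ℕ) (F : Mat n → ℂ) (s : Set (Mat n)) : Prop :=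
  ContDiffOn ℝ (⊤ : ℕ∞) (fun g : Fin n → Fin n → ℂ => F (Matrix.of g))
    ((fun g : Fin n → Fin n → ℂ => Matrix.of g) ⁻¹' s)

/-- First family of equations of the generalized Hua system. -/
def HuaEq1 (n : ℕ) (ν : ℤ) (l : ℂ) (F : Mat n → ℂ) (Z : Mat n) (a b : Fin n) : Prop :=
  (∑ p, ∑ q, ∑ c, ((1 : Mat n) - Z * Zᴴ) a p * ((1 : Mat n) - Zᴴ * Z) q c
      * wAnti n (fun W => wHol n F b c W) p q Z)
    - (ν : ℂ) * ∑ p, ∑ q, ((1 : Mat n) - Z * Zᴴ) a p * Zᴴ q b * wAnti n F p q Z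
  = -(1 / 4) * (l ^ 2 + ((n : ℂ) - (ν : ℂ)) ^ 2) * F Z * (if a = b then 1 else 0)

/-- Second family of equations of the generalized Hua system. -/
def HuaEq2 (n : ℕ) (ν : ℤ) (l : ℂ) (F : Mat n → ℂ) (Z : Mat n) (a b : Fin n) : Prop :=
  (-(∑ p, ∑ q, ∑ c, ((1 : Mat n) - Z * Zᴴ) p q * ((1 : Mat n) - Zᴴ * Z) c b
      * wHol n (fun W => wAnti n F q c W) p a Z))
    + (ν : ℂ) * ∑ p, ∑ q, Zᴴ a p * ((1 : Mat n) - Z * Zᴴ) q b * wAnti n F p q Z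
  = (1 / 4) * (l ^ 2 + ((n : ℂ) - (ν : ℂ)) ^ 2) * F Z * (if a = b then 1 else 0)

/-- `F ∈ ℰ_{λ,ν}(𝒟)`: smooth on `𝒟` and a solution of the generalized Hua system. -/
def InHuaSpace (n : ℕ) (ν : ℤ) (l : ℂ) (F : Mat n → ℂ) : Prop :=
  RSmoothOn n F (mBall n) ∧ ∀ Z ∈ mBall n, ∀ a b : Fin n,
    HuaEq1 n ν l F Z a b ∧ HuaEq2 n ν l F Z a b

/-- The Hardy-type norm `‖F‖_{*,p}` (as an extended real number). -/
def starNorm (n : ℕ) (ν : ℤ) (l : ℂ) (p : ℝ) [MeasurableSpace (UG n)]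
    (μS : Measure (UG n)) (F : Mat n → ℂ) : ℝ≥0∞ :=
  ⨆ r ∈ Set.Ico (0 : ℝ) 1,
    ENNReal.ofReal ((1 - r ^ 2) ^ (-((n : ℝ) * ((n : ℝ) - (ν : ℝ) - (Complex.I * l).re)) / 2)
      * (∫ U : UG n, ‖F ((r : ℂ) • (U : Mat n))‖ ^ p ∂μS) ^ (1 / p))

/-- The Poisson transform `(P_{λ,ν}f)(Z) = ∫_S P_{λ,ν}(Z,U) f(U) dμ(U)`. -/
def poissonT (n : ℕ) (ν : ℤ) (l : ℂ) [MeasurableSpace (UG n)]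
    (μ : Measure (UG n)) (f : UG n → ℂ) (Z : Mat n) : ℂ :=
  ∫ U : UG n, pKer n ν l Z (U : Mat n) * f U ∂μ

/-- The `L^p(S)` norm. -/
def lpNormS (n : ℕ) (p : ℝ) [MeasurableSpace (UG n)] (μ : Measure (UG n))
    (f : UG n → ℂ) : ℝ :=
  (∫ U : UG n, ‖f U‖ ^ p ∂μ) ^ (1 / p)

/-- Condition (A): `Re(iλ) > n−1` and `iλ ∉ 2ℤ⁻ + n − 2 ± ν`. -/
def conditionA (n : ℕ) (ν : ℤ) (l : ℂ) : Prop :=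
  (n : ℝ) - 1 < (Complex.I * l).re ∧
    ∀ m : ℤ, m ≤ 0 →
      Complex.I * l ≠ 2 * (m : ℂ) + (n : ℂ) - 2 + (ν : ℂ) ∧
      Complex.I * l ≠ 2 * (m : ℂ) + (n : ℂ) - 2 - (ν : ℂ)

/-- The Gindikin Gamma function `Γ_Ω(s) = ∏_{j=1}^n Γ(s−j+1)`. -/
def GammaOmega (n : ℕ) (s : ℂ) : ℂ := ∏ j ∈ Finset.range n, Complex.Gamma (s - (j : ℂ))

/-- The `c`-function `c_ν(λ)`. -/
def cNu (n : ℕ) (ν : ℤ) (l : ℂ) : ℂ :=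
  GammaOmega n (n : ℂ) * GammaOmega n (Complex.I * l) /
    (GammaOmega n ((Complex.I * l + (n : ℂ) + (ν : ℂ)) / 2)
      * GammaOmega n ((Complex.I * l + (n : ℂ) - (ν : ℂ)) / 2))

section HuaAux

variable {n : ℕ}

lemma trace_adjugate_mul (A B : Mat n) :
    (A.adjugate * B).trace = ∑ i, (A.updateCol i fun r => B r i).det := by
  have h : ∀ i, (A.updateCol i fun r => B r i).det
      = ∑ r, A.adjugate i r * B r i := by
    intro i
    rw [← Matrix.cramer_apply, Matrix.cramer_eq_adjugate_mulVec]
    simp [Matrix.mulVec, dotProduct]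
  simp [Matrix.trace, Matrix.diag, Matrix.mul_apply, h]

lemma hasDerivAt_det_path {M : ℝ → Mat n} {M' : Mat n} {t₀ : ℝ}
    (h : ∀ i j, HasDerivAt (fun t => M t i j) (M' i j) t₀) :
    HasDerivAt (fun t => (M t).det) (((M t₀).adjugate * M').trace) t₀ := by
  have key : HasDerivAt (fun t => (M t).det)
      (∑ σ : Equiv.Perm (Fin n), ((Equiv.Perm.sign σ : ℤ) : ℂ) *
        ∑ i, (∏ j ∈ Finset.univ.erase i, M t₀ (σ j) j) • M' (σ i) i) t₀ := by
    have heq : (fun t => (M t).det)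
        = fun t => ∑ σ : Equiv.Perm (Fin n), ((Equiv.Perm.sign σ : ℤ) : ℂ) * ∏ i, M t (σ i) i := by
      funext t; simp [Matrix.det_apply, Units.smul_def, zsmul_eq_mul]
    rw [heq]
    exact HasDerivAt.fun_sum fun σ _ =>
      (HasDerivAt.fun_finsetProd fun i _ => h (σ i) i).const_mul _
  convert key using 1
  rw [trace_adjugate_mul]
  have expand : ∀ i : Fin n, ((M t₀).updateCol i fun r => M' r i).det
      = ∑ σ : Equiv.Perm (Fin n), ((Equiv.Perm.sign σ : ℤ) : ℂ) *
          (M' (σ i) i * ∏ j ∈ Finset.univ.erase i, M t₀ (σ j) j) := by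
    intro i
    rw [Matrix.det_apply]
    refine Finset.sum_congr rfl fun σ _ => ?_
    rw [Units.smul_def, zsmul_eq_mul]
    congr 1
    rw [← Finset.mul_prod_erase Finset.univ _ (Finset.mem_univ i)]
    congr 1
    · simp [Matrix.updateCol_apply]
    · exact Finset.prod_congr rfl fun k hk => by
        simp [Matrix.updateCol_apply, (Finset.mem_erase.mp hk).1]
  simp only [expand, smul_eq_mul]
  rw [Finset.sum_comm]
  refine Finset.sum_congr rfl fun σ _ => ?_
  rw [Finset.mul_sum]
  exact Finset.sum_congr rfl fun i _ => by ring

lemma hasDerivAt_ofReal' (t₀ : ℝ) : HasDerivAt (fun t : ℝ => (t : ℂ)) 1 t₀ := by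
  exact Complex.ofRealCLM.hasDerivAt (x := t₀)

lemma hasDerivAt_entry_linear (Z E C : Mat n) (i j : Fin n) :
    HasDerivAt (fun t : ℝ => ((1 : Mat n) - (Z + t • E) * C) i j) ((-(E * C)) i j) 0 := by
  have heq : (fun t : ℝ => ((1 : Mat n) - (Z + t • E) * C) i j)
      = fun t : ℝ => ((1 : Mat n) - Z * C) i j - (t : ℂ) * ((E * C) i j) := by
    funext t
    simp [Matrix.sub_apply, Matrix.add_mul, Matrix.add_apply, Matrix.smul_mul,
      Matrix.smul_apply, Complex.real_smul]
    ring
  rw [heq]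
  simpa using (((hasDerivAt_ofReal' 0).mul_const ((E * C) i j)).const_sub _)

lemma path_expand (Z E : Mat n) (t : ℝ) :
    (1 : Mat n) - (Z + t • E) * (Z + t • E)ᴴ
      = ((1 : Mat n) - Z * Zᴴ) - t • (E * Zᴴ + Z * Eᴴ) - (t ^ 2) • (E * Eᴴ) := by
  rw [conjTranspose_add, Matrix.conjTranspose_smul, star_trivial]
  rw [Matrix.add_mul, Matrix.mul_add, Matrix.mul_add, Matrix.smul_mul, Matrix.smul_mul,
    Matrix.mul_smul, Matrix.mul_smul, smul_smul, ← pow_two]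
  rw [smul_add]
  abel

lemma hasDerivAt_entry_quad (Z E : Mat n) (i j : Fin n) :
    HasDerivAt (fun t : ℝ => ((1 : Mat n) - (Z + t • E) * (Z + t • E)ᴴ) i j)
      ((-(E * Zᴴ + Z * Eᴴ)) i j) 0 := by
  have heq : (fun t : ℝ => ((1 : Mat n) - (Z + t • E) * (Z + t • E)ᴴ) i j)
      = fun t : ℝ => ((1 : Mat n) - Z * Zᴴ) i j - (t : ℂ) * ((E * Zᴴ + Z * Eᴴ) i j)
          - ((t : ℂ) * (t : ℂ)) * ((E * Eᴴ) i j) := by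
    funext t
    rw [path_expand]
    simp [Matrix.sub_apply, Matrix.smul_apply, Complex.real_smul]
    ring
  rw [heq]
  have h1 : HasDerivAt (fun t : ℝ => ((1 : Mat n) - Z * Zᴴ) i j
      - (t : ℂ) * ((E * Zᴴ + Z * Eᴴ) i j)) (-((E * Zᴴ + Z * Eᴴ) i j)) 0 := by
    simpa using (((hasDerivAt_ofReal' 0).mul_const ((E * Zᴴ + Z * Eᴴ) i j)).const_sub _)
  have h2 : HasDerivAt (fun t : ℝ => ((t : ℂ) * (t : ℂ)) * ((E * Eᴴ) i j)) 0 0 := by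
    simpa using (((hasDerivAt_ofReal' 0).mul (hasDerivAt_ofReal' 0)).mul_const ((E * Eᴴ) i j))
  simpa [Matrix.neg_apply, Matrix.add_apply] using h1.fun_sub h2

lemma det_one_sub_ne_zero {W : Mat n} (hW : ((1 : Mat n) - W * Wᴴ).PosDef) :
    ((1 : Mat n) - W).det ≠ 0 := by
  intro h
  have h2 : ((1 : Mat n) - Wᴴ).det = 0 := by
    have : ((1 : Mat n) - W)ᴴ.det = 0 := by
      rw [Matrix.det_conjTranspose, h, star_zero]
    simpa [Matrix.conjTranspose_sub] using this
  obtain ⟨v, hv0, hv⟩ := (Matrix.exists_mulVec_eq_zero_iff).mpr h2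
  have hWv : Wᴴ *ᵥ v = v := by
    rw [Matrix.sub_mulVec, Matrix.one_mulVec] at hv
    exact (sub_eq_zero.mp hv).symm
  have hpos := hW.dotProduct_mulVec_pos hv0
  have hform : dotProduct (star v) (((1 : Mat n) - W * Wᴴ) *ᵥ v) = 0 := by
    rw [Matrix.sub_mulVec, Matrix.one_mulVec, ← Matrix.mulVec_mulVec, hWv]
    rw [dotProduct_sub]
    have hrow : star v ᵥ* W = star v := by
      have := Matrix.star_mulVec (M := Wᴴ) (v := v)
      rw [hWv, Matrix.conjTranspose_conjTranspose] at this
      exact this.symm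
    rw [dotProduct_mulVec, hrow, sub_self]
  rw [hform] at hpos
  exact lt_irrefl _ hpos

lemma adjugate_eq_det_smul_inv {A : Mat n} (hA : A.det ≠ 0) :
    A.adjugate = A.det • A⁻¹ := by
  rw [Matrix.inv_def, Ring.inverse_eq_inv', smul_smul, mul_inv_cancel₀ hA, one_smul]

lemma trace_adjugate_neg_mul {A N : Mat n} (hA : A.det ≠ 0) :
    (A.adjugate * (-N)).trace = -(A.det * (A⁻¹ * N).trace) := by
  rw [adjugate_eq_det_smul_inv hA, Matrix.smul_mul, Matrix.trace_smul, mul_neg,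
    Matrix.trace_neg, smul_eq_mul, mul_neg]

lemma dirDeriv_pKer (ν : ℤ) (l : ℂ) (U : Mat n) (hUU : Uᴴ * U = 1)
    (Z E : Mat n) (hZ : ((1 : Mat n) - Z * Zᴴ).PosDef) :
    dirDeriv n (fun W => pKer n ν l W U) E Z
      = pKer n ν l Z U *
          (((Complex.I * l + (n : ℂ) - (ν : ℂ)) / 2) *
              ((((1 : Mat n) - Z * Uᴴ)⁻¹ * (E * Uᴴ)).trace
               + (starRingEnd ℂ) ((((1 : Mat n) - Z * Uᴴ)⁻¹ * (E * Uᴴ)).trace)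
               - (((1 : Mat n) - Z * Zᴴ)⁻¹ * (E * Zᴴ + Z * Eᴴ)).trace)
            + (ν : ℂ) * (((1 : Mat n) - Z * Uᴴ)⁻¹ * (E * Uᴴ)).trace) := by
  set s : ℂ := (Complex.I * l + (n : ℂ) - (ν : ℂ)) / 2 with hs
  set Tb : ℂ := (((1 : Mat n) - Z * Uᴴ)⁻¹ * (E * Uᴴ)).trace with hTb
  set Ta : ℂ := (((1 : Mat n) - Z * Zᴴ)⁻¹ * (E * Zᴴ + Z * Eᴴ)).trace with hTa
  set b0 : ℂ := ((1 : Mat n) - Z * Uᴴ).det with hb0def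
  set a0 : ℂ := ((1 : Mat n) - Z * Zᴴ).det with ha0def
  set c0 : ℂ := (starRingEnd ℂ) b0 with hc0def
  set bb : ℝ → ℂ := fun t => ((1 : Mat n) - (Z + t • E) * Uᴴ).det with hbb
  set aa : ℝ → ℂ := fun t => ((1 : Mat n) - (Z + t • E) * (Z + t • E)ᴴ).det with haa
  set cc : ℝ → ℂ := fun t => star (bb t) with hcc
  have hbb0 : bb 0 = b0 := by simp [hbb, hb0def]
  have haa0 : aa 0 = a0 := by simp [haa, ha0def]
  have hcc0 : cc 0 = c0 := by simp [hcc, hbb0, hc0def]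
  -- nonvanishing
  have ha0pos : (0 : ℂ) < a0 := hZ.det_pos
  have ha0 : a0 ≠ 0 := ha0pos.ne'
  have hWW : Z * Uᴴ * (Z * Uᴴ)ᴴ = Z * Zᴴ := by
    rw [conjTranspose_mul, conjTranspose_conjTranspose, Matrix.mul_assoc,
      ← Matrix.mul_assoc Uᴴ U Zᴴ, hUU, Matrix.one_mul]
  have hb0 : b0 ≠ 0 := by
    have : ((1 : Mat n) - (Z * Uᴴ) * (Z * Uᴴ)ᴴ).PosDef := by rw [hWW]; exact hZ
    exact det_one_sub_ne_zero this
  have hc0 : c0 ≠ 0 := by simp [hc0def, hb0]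
  have hden : b0 * c0 ≠ 0 := mul_ne_zero hb0 hc0
  -- x0 facts
  set x0 : ℂ := a0 / (b0 * c0) with hx0def
  have hx0ne : x0 ≠ 0 := div_ne_zero ha0 hden
  have ha0re : a0 = ((a0.re : ℝ) : ℂ) := by
    have h1 := (Complex.lt_def.mp ha0pos).2
    exact (Complex.ext (by simp) (by simp [← h1])).symm
  have hx0slit : x0 ∈ Complex.slitPlane := by
    have hbc : b0 * c0 = ((Complex.normSq b0 : ℝ) : ℂ) := by
      rw [hc0def, Complex.mul_conj]
    have hre : 0 < x0.re := by
      rw [hx0def, hbc, ha0re, ← Complex.ofReal_div]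
      simp only [Complex.ofReal_re]
      exact div_pos (Complex.lt_def.mp ha0pos).1 (Complex.normSq_pos.mpr hb0)
    exact Or.inl hre
  -- derivatives of the path functions
  have hb' : HasDerivAt bb (-(b0 * Tb)) 0 := by
    have h1 := hasDerivAt_det_path (t₀ := (0 : ℝ))
      (fun i j => hasDerivAt_entry_linear Z E Uᴴ i j)
    simp only [zero_smul, add_zero] at h1
    rwa [trace_adjugate_neg_mul (by rwa [← hb0def])] at h1
  have ha' : HasDerivAt aa (-(a0 * Ta)) 0 := by
    have h1 := hasDerivAt_det_path (t₀ := (0 : ℝ))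
      (fun i j => hasDerivAt_entry_quad Z E i j)
    simp only [zero_smul, add_zero] at h1
    rwa [trace_adjugate_neg_mul (by rwa [← ha0def])] at h1
  have hc' : HasDerivAt cc (-(c0 * (starRingEnd ℂ) Tb)) 0 := by
    have h3 : -(c0 * (starRingEnd ℂ) Tb) = star (-(b0 * Tb)) := by
      rw [star_neg, star_mul', hc0def, starRingEnd_apply, starRingEnd_apply]
    rw [h3]
    exact hb'.star
  have hdenAt : bb 0 * cc 0 ≠ 0 := by rw [hbb0, hcc0]; exact hden
  have hx' : HasDerivAt (fun t => aa t / (bb t * cc t))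
      (((-(a0 * Ta)) * (b0 * c0) - a0 * ((-(b0 * Tb)) * c0 + b0 * (-(c0 * (starRingEnd ℂ) Tb))))
        / (b0 * c0) ^ 2) 0 := by
    have h1 := ha'.fun_div (hb'.fun_mul hc') hdenAt
    rw [hbb0, haa0, hcc0] at h1
    exact h1
  have hcpow : HasDerivAt (fun t => (aa t / (bb t * cc t)) ^ s)
      ((s * x0 ^ (s - 1)) *
        (((-(a0 * Ta)) * (b0 * c0) - a0 * ((-(b0 * Tb)) * c0 + b0 * (-(c0 * (starRingEnd ℂ) Tb))))
          / (b0 * c0) ^ 2)) 0 := by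
    have h2 := (Complex.hasStrictDerivAt_cpow_const (c := s) hx0slit).hasDerivAt
    have h3 := h2.comp_of_eq 0 hx' (by rw [hbb0, haa0, hcc0])
    simpa [Function.comp_def] using h3
  have hzpow : HasDerivAt (fun t => bb t ^ (-ν))
      ((((-ν : ℤ) : ℂ) * b0 ^ (-ν - 1)) * (-(b0 * Tb))) 0 := by
    have h2 := (hasDerivAt_zpow (-ν) b0 (Or.inl hb0)).comp_of_eq 0 hb' hbb0.symm
    simpa [Function.comp_def] using h2
  have hP := hcpow.fun_mul hzpow
  rw [hbb0, haa0, hcc0] at hP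
  -- identify the function with pKer along the path
  have habs : ∀ w : ℂ, ((‖w‖ : ℝ) : ℂ) ^ 2 = w * (starRingEnd ℂ) w := by
    intro w
    rw [← Complex.ofReal_pow, Complex.sq_norm, Complex.mul_conj]
  have hfun : (fun t : ℝ => pKer n ν l (Z + t • E) U)
      = fun t => (aa t / (bb t * cc t)) ^ s * bb t ^ (-ν) := by
    funext t
    rw [pKer, habs]
    rfl
  have hpK : pKer n ν l Z U = x0 ^ s * b0 ^ (-ν) := by
    have := congrFun hfun 0
    simp only [zero_smul, add_zero] at this
    rw [this, hbb0, haa0, hcc0]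
  have hderiv : dirDeriv n (fun W => pKer n ν l W U) E Z
      = (s * x0 ^ (s - 1)) *
          (((-(a0 * Ta)) * (b0 * c0) - a0 * ((-(b0 * Tb)) * c0 + b0 * (-(c0 * (starRingEnd ℂ) Tb))))
            / (b0 * c0) ^ 2) * b0 ^ (-ν)
        + x0 ^ s * ((((-ν : ℤ) : ℂ) * b0 ^ (-ν - 1)) * (-(b0 * Tb))) := by
    rw [dirDeriv, hfun]
    exact hP.deriv
  rw [hderiv, hpK]
  -- scalar algebra
  have hxs : x0 ^ (s - 1) = x0 ^ s / x0 := by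
    rw [Complex.cpow_sub _ _ hx0ne, Complex.cpow_one]
  have hbz : b0 ^ (-ν - 1) = b0 ^ (-ν) * b0⁻¹ := by
    rw [zpow_sub_one₀ hb0]
  rw [hxs, hbz, hx0def]
  push_cast
  field_simp
  ring

lemma trace_mul_stdBasisMatrix (M : Mat n) (p q : Fin n) (d : ℂ) :
    (M * Matrix.single p q d).trace = d * M q p := by
  simp only [Matrix.trace, Matrix.diag, Matrix.mul_apply, Matrix.single, Matrix.of_apply,
    mul_ite, mul_zero, ite_and]
  rw [Finset.sum_comm]
  simp [Finset.sum_ite_eq, mul_comm]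

lemma stdBasis_conjTranspose (p q : Fin n) (d : ℂ) :
    (Matrix.single p q d)ᴴ = Matrix.single q p (starRingEnd ℂ d) := by
  ext i j
  simp only [Matrix.conjTranspose_apply, Matrix.single, Matrix.of_apply]
  by_cases h1 : q = i <;> by_cases h2 : p = j <;> simp [h1, h2, and_comm]

lemma trace_mul_stdBasis_mul (M N : Mat n) (p q : Fin n) (d : ℂ) :
    (M * (Matrix.single p q d * N)).trace = d * (N * M) q p := by
  rw [← Matrix.mul_assoc, Matrix.trace_mul_comm, ← Matrix.mul_assoc, trace_mul_stdBasisMatrix]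


end HuaAux

/-- The holomorphic derivative of the Poisson kernel:
`∂'P_{λ,ν}(Z,U) = P_{λ,ν}(Z,U) ((iλ+n+ν)/2 · U*(I−ZU*)⁻¹ − (iλ+n−ν)/2 · Z*(I−ZZ*)⁻¹)`. -/
theorem statement8 (n : ℕ) (hn : 1 ≤ n) (ν : ℤ) (l : ℂ) (U : UG n)
    (Z : Mat n) (hZ : Z ∈ mBall n) (i j : Fin n) :
    wHol n (fun W => pKer n ν l W (U : Mat n)) i j Z
      = pKer n ν l Z (U : Mat n) *
          (((Complex.I * l + (n : ℂ) + (ν : ℂ)) / 2)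
              • ((U : Mat n)ᴴ * ((1 : Mat n) - Z * (U : Mat n)ᴴ)⁻¹)
            - ((Complex.I * l + (n : ℂ) - (ν : ℂ)) / 2)
              • (Zᴴ * ((1 : Mat n) - Z * Zᴴ)⁻¹)) j i := by
  have hUU : (U : Mat n)ᴴ * (U : Mat n) = 1 := by
    have := U.prop
    rw [Matrix.mem_unitaryGroup_iff'] at this
    rwa [← Matrix.star_eq_conjTranspose]
  have hZp : ((1 : Mat n) - Z * Zᴴ).PosDef := hZ
  set B : Mat n := ((1 : Mat n) - Z * (U : Mat n)ᴴ)⁻¹ with hB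
  set A : Mat n := ((1 : Mat n) - Z * Zᴴ)⁻¹ with hA
  set s : ℂ := (Complex.I * l + (n : ℂ) - (ν : ℂ)) / 2 with hs
  set P : ℂ := pKer n ν l Z (U : Mat n) with hP
  -- the two directional derivatives
  have hD : ∀ c : ℂ, dirDeriv n (fun W => pKer n ν l W (U : Mat n))
      (Matrix.single i j c) Z
      = P * (s * (c * ((U : Mat n)ᴴ * B) j i
              + (starRingEnd ℂ) c * (starRingEnd ℂ) (((U : Mat n)ᴴ * B) j i)
              - (c * ((Zᴴ * A) j i) + (starRingEnd ℂ) c * ((A * Z) i j)))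
            + (ν : ℂ) * (c * ((U : Mat n)ᴴ * B) j i)) := by
    intro c
    rw [dirDeriv_pKer ν l (U : Mat n) hUU Z (Matrix.single i j c) hZp]
    rw [trace_mul_stdBasis_mul, Matrix.mul_add, Matrix.trace_add, trace_mul_stdBasis_mul,
      stdBasis_conjTranspose, ← Matrix.mul_assoc, trace_mul_stdBasisMatrix,
      RingHom.map_mul]
  rw [wHol, hD 1, hD Complex.I]
  have h1 : (starRingEnd ℂ) (1 : ℂ) = 1 := by simp
  simp only [h1, Complex.conj_I, Matrix.sub_apply, Matrix.smul_apply, smul_eq_mul, one_mul]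
  have hcoef : (Complex.I * l + (n : ℂ) + (ν : ℂ)) / 2 = s + ν := by
    rw [hs]; ring
  rw [hcoef]
  linear_combination (-(1/2) * P * (s * (((U : Mat n)ᴴ * B) j i - (Zᴴ * A) j i)
      + (ν : ℂ) * ((U : Mat n)ᴴ * B) j i
      - s * ((starRingEnd ℂ) (((U : Mat n)ᴴ * B) j i))
      + s * ((A * Z) i j))) * Complex.I_mul_I

end
end

section
/- Let n ≥ 1, ν ∈ ℤ, λ ∈ ℂ. For every Z ∈ 𝒟, every U ∈ S, and all 1 ≤ i,j ≤ n, the antiholomorphic Wirtinger derivative of the Poisson kernel in the variable z_{ij} satisfies ∂P_{λ,ν}(·,U)/∂z̄_{ij}(Z) = ((iλ+n−ν)/2) · P_{λ,ν}(Z,U) · [ (I−UZ*)^{−1}U − (I−ZZ*)^{−1}Z ]_{ij}, where [M]_{ij} denotes the (i,j) entry of the matrix M. -/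
open MeasureTheory Complex Matrix Filter
open scoped ENNReal Real ComplexOrder

noncomputable section

private def detCM (n : ℕ) : ContinuousMultilinearMap ℂ (fun _ : Fin n => (Fin n → ℂ)) ℂ :=
  { (Matrix.detRowAlternating : (Fin n → ℂ) [⋀^Fin n]→ₗ[ℂ] ℂ).toMultilinearMap with
    cont := continuous_id.matrix_det }

private lemma sum_updateRow_det {n : ℕ} (A B : Mat n) :
    ∑ i, (A.updateRow i (B i)).det = (A.adjugate * B).trace := by
  have h : ∀ i, (A.updateRow i (B i)).det = ∑ j, A.adjugate j i * B i j := by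
    intro i
    rw [← Matrix.cramer_transpose_apply, Matrix.cramer_eq_adjugate_mulVec]
    simp [Matrix.mulVec, dotProduct, ← Matrix.adjugate_transpose, Matrix.transpose_apply]
  simp only [h, Matrix.trace, Matrix.diag_apply, Matrix.mul_apply]
  rw [Finset.sum_comm]

private lemma jacobi {n : ℕ} {M : ℝ → Mat n} {M' : Mat n} {t₀ : ℝ}
    (h : ∀ i j, HasDerivAt (fun t => M t i j) (M' i j) t₀) :
    HasDerivAt (fun t => (M t).det) (((M t₀).adjugate * M').trace) t₀ := by
  have hg : HasDerivAt (F := Fin n → Fin n → ℂ) (fun t => fun i j => M t i j)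
      (fun i j => M' i j) t₀ :=
    (hasDerivAt_pi (φ := fun t => fun i j => M t i j) (φ' := fun i j => M' i j)
        (x := t₀)).2 fun i =>
      (hasDerivAt_pi (φ := fun t => M t i) (φ' := M' i) (x := t₀)).2 fun j => h i j
  have hd := (((detCM n).hasFDerivAt (x := fun i j => M t₀ i j)).restrictScalars
      ℝ).comp_hasDerivAt t₀ hg
  have hval : (((detCM n).linearDeriv (fun i j => M t₀ i j)).restrictScalars ℝ)
      (fun i j => M' i j) = ((M t₀).adjugate * M').trace := by
    show (detCM n).linearDeriv (fun i j => M t₀ i j) (fun i j => M' i j) = _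
    rw [ContinuousMultilinearMap.linearDeriv_apply, ← sum_updateRow_det]
    rfl
  rw [hval] at hd
  exact hd

private lemma quad_hasDerivAt (a b c : ℂ) :
    HasDerivAt (fun t : ℝ => a + t • b + (t * t) • c) b 0 := by
  have h1 : HasDerivAt (fun t : ℝ => t • b) ((1:ℝ) • b) 0 := (hasDerivAt_id (0:ℝ)).smul_const b
  have h2 : HasDerivAt (fun t : ℝ => (t * t) • c) (((1:ℝ) * 0 + 0 * 1) • c) 0 :=
    ((hasDerivAt_id (0:ℝ)).mul (hasDerivAt_id (0:ℝ))).smul_const c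
  exact ((h1.const_add a).add h2).congr_deriv (by simp)

private lemma curveA {n : ℕ} (Z E : Mat n) :
    ∀ t : ℝ, (1 : Mat n) - (Z + t • E) * (Z + t • E)ᴴ
      = ((1 : Mat n) - Z * Zᴴ) + t • (-(E * Zᴴ + Z * Eᴴ))
          + (t * t) • (-(E * Eᴴ)) := by
  intro t
  have hs : (t • E)ᴴ = t • Eᴴ := by
    rw [Matrix.conjTranspose_smul, star_trivial]
  rw [Matrix.conjTranspose_add, hs, add_mul, mul_add, mul_add, Matrix.smul_mul,
    Matrix.mul_smul, Matrix.mul_smul, Matrix.smul_mul, smul_smul]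
  module

private lemma curveB {n : ℕ} (Z E V : Mat n) :
    ∀ t : ℝ, (1 : Mat n) - (Z + t • E) * V
      = ((1 : Mat n) - Z * V) + t • (-(E * V)) + (t * t) • (0 : Mat n) := by
  intro t
  rw [add_mul, Matrix.smul_mul]
  module

private lemma entries_hasDerivAt {n : ℕ} (A₀ A₁ A₂ : Mat n) :
    ∀ i j, HasDerivAt
      (fun t : ℝ => (A₀ + t • A₁ + (t * t) • A₂) i j) (A₁ i j) 0 := by
  intro i j
  have := quad_hasDerivAt (A₀ i j) (A₁ i j) (A₂ i j)
  simpa [Matrix.add_apply, Matrix.smul_apply] using this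

private lemma hasDerivAt_detA {n : ℕ} (Z E : Mat n) :
    HasDerivAt (fun t : ℝ => ((1 : Mat n) - (Z + t • E) * (Z + t • E)ᴴ).det)
      ((((1 : Mat n) - Z * Zᴴ).adjugate * (-(E * Zᴴ + Z * Eᴴ))).trace) 0 := by
  have h := jacobi (M := fun t : ℝ => ((1 : Mat n) - Z * Zᴴ) + t • (-(E * Zᴴ + Z * Eᴴ))
      + (t * t) • (-(E * Eᴴ))) (M' := -(E * Zᴴ + Z * Eᴴ)) (t₀ := 0)
    (entries_hasDerivAt _ _ _)
  simp only [curveA Z E]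
  simpa using h

private lemma hasDerivAt_detB {n : ℕ} (Z E V : Mat n) :
    HasDerivAt (fun t : ℝ => ((1 : Mat n) - (Z + t • E) * V).det)
      ((((1 : Mat n) - Z * V).adjugate * (-(E * V))).trace) 0 := by
  have h := jacobi (M := fun t : ℝ => ((1 : Mat n) - Z * V) + t • (-(E * V))
      + (t * t) • (0 : Mat n)) (M' := -(E * V)) (t₀ := 0)
    (entries_hasDerivAt _ _ _)
  simp only [curveB Z E V]
  simpa using h

open scoped ComplexOrder

private lemma det_ne_zero_aux {n : ℕ} {Z : Mat n} (hZ : ((1 : Mat n) - Z * Zᴴ).PosDef)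
    {U : Mat n} (hU : U * Uᴴ = 1) : ((1 : Mat n) - Z * Uᴴ).det ≠ 0 := by
  intro h
  obtain ⟨v, hv0, hv⟩ := (Matrix.exists_mulVec_eq_zero_iff).mpr h
  rw [Matrix.sub_mulVec, Matrix.one_mulVec, sub_eq_zero] at hv
  set w := Uᴴ *ᵥ v with hw
  set x := Zᴴ *ᵥ v with hx
  have hveq : Z *ᵥ w = v := by
    rw [hw, Matrix.mulVec_mulVec, ← hv]
  let e := (WithLp.equiv 2 (Fin n → ℂ)).symm
  have key : ∀ a b : Fin n → ℂ, (inner ℂ (e a) (e b) : ℂ) = dotProduct (star a) b :=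
    fun a b => dotProduct_comm b (star a)
  have hXW : (inner ℂ (e x) (e w) : ℂ) = dotProduct (star v) v := by
    rw [key, hx, Matrix.star_mulVec, Matrix.conjTranspose_conjTranspose,
      ← dotProduct_mulVec, hveq]
  have hWW : (inner ℂ (e w) (e w) : ℂ) = dotProduct (star v) v := by
    rw [key, hw, Matrix.star_mulVec, Matrix.conjTranspose_conjTranspose,
      ← dotProduct_mulVec, Matrix.mulVec_mulVec, hU, Matrix.one_mulVec]
  have hVV : (inner ℂ (e v) (e v) : ℂ) = dotProduct (star v) v := key v v
  have hlt : (inner ℂ (e x) (e x) : ℂ) < inner ℂ (e v) (e v) := by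
    have hp := hZ.dotProduct_mulVec_pos hv0
    rw [Matrix.sub_mulVec, Matrix.one_mulVec, dotProduct_sub] at hp
    have hxx : dotProduct (star v) ((Z * Zᴴ) *ᵥ v) = dotProduct (star x) x := by
      rw [← Matrix.mulVec_mulVec, dotProduct_mulVec (star v), hx,
        Matrix.star_mulVec, Matrix.conjTranspose_conjTranspose]
    rw [hxx] at hp
    rw [key, key, hx]
    exact sub_pos.mp hp
  have hnX : (inner ℂ (e x) (e x) : ℂ) = ((‖e x‖ : ℂ)) ^ 2 := inner_self_eq_norm_sq_to_K _
  have hnW : (inner ℂ (e w) (e w) : ℂ) = ((‖e w‖ : ℂ)) ^ 2 := inner_self_eq_norm_sq_to_K _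
  have hnV : (inner ℂ (e v) (e v) : ℂ) = ((‖e v‖ : ℂ)) ^ 2 := inner_self_eq_norm_sq_to_K _
  have hV0 : 0 < ‖e v‖ := by
    rw [norm_pos_iff]
    intro h0
    exact hv0 (by simpa [e] using congrArg (WithLp.equiv 2 (Fin n → ℂ)) h0)
  have hXV : ‖e x‖ < ‖e v‖ := by
    refine lt_of_pow_lt_pow_left₀ 2 (norm_nonneg _) ?_
    have := hlt
    rw [hnX, hnV] at this
    have h2 : ((‖e x‖ ^ 2 : ℝ) : ℂ) < ((‖e v‖ ^ 2 : ℝ) : ℂ) := by push_cast; exact this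
    exact_mod_cast h2
  have hWV : ‖e w‖ = ‖e v‖ := by
    have h2 : ((‖e w‖ ^ 2 : ℝ) : ℂ) = ((‖e v‖ ^ 2 : ℝ) : ℂ) := by
      push_cast
      rw [← hnW, ← hnV, hWW, hVV]
    have h3 : ‖e w‖ ^ 2 = ‖e v‖ ^ 2 := by exact_mod_cast h2
    rw [← Real.sqrt_sq (norm_nonneg (e w)), ← Real.sqrt_sq (norm_nonneg (e v)), h3]
  have hCS : ‖(inner ℂ (e x) (e w) : ℂ)‖ ≤ ‖e x‖ * ‖e w‖ := norm_inner_le_norm _ _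
  have hfin : ‖e v‖ ^ 2 ≤ ‖e x‖ * ‖e w‖ := by
    have : ‖(inner ℂ (e x) (e w) : ℂ)‖ = ‖e v‖ ^ 2 := by
      rw [hXW, ← hVV, hnV, norm_pow, Complex.norm_real, Real.norm_eq_abs,
        _root_.abs_of_nonneg (norm_nonneg _)]
    linarith [hCS, this.symm.le]
  nlinarith [hfin, hXV, hWV, hV0]

private lemma deriv_combo {A B : ℝ → ℂ} {a b da db : ℂ} (s : ℂ) (ν : ℤ)
    (hA : HasDerivAt A da 0) (hB : HasDerivAt B db 0) (ha : A 0 = a) (hb : B 0 = b)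
    (ha0 : a ≠ 0) (hb0 : b ≠ 0)
    (hslit : a / (b * (starRingEnd ℂ) b) ∈ Complex.slitPlane) :
    HasDerivAt (fun t => (A t / (B t * (starRingEnd ℂ) (B t))) ^ s * B t ^ (-ν))
      ((a / (b * (starRingEnd ℂ) b)) ^ s * b ^ (-ν) *
        (s * (da / a - db / b - (starRingEnd ℂ) db / (starRingEnd ℂ) b)
          - (ν : ℂ) * (db / b))) 0 := by
  have hcb0 : (starRingEnd ℂ) b ≠ 0 := by simpa using hb0
  have hbb0 : B 0 * (starRingEnd ℂ) (B 0) ≠ 0 := by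
    rw [hb]; exact mul_ne_zero hb0 hcb0
  have hBc : HasDerivAt (fun t => (starRingEnd ℂ) (B t)) ((starRingEnd ℂ) db) 0 := hB.star
  have hq : HasDerivAt (fun t => A t / (B t * (starRingEnd ℂ) (B t)))
      ((da * (b * (starRingEnd ℂ) b) - a * (db * (starRingEnd ℂ) b + b * (starRingEnd ℂ) db))
        / (b * (starRingEnd ℂ) b) ^ 2) 0 := by
    have := hA.div (hB.mul hBc) hbb0
    simp only [Pi.mul_apply, ha, hb] at this
    exact this
  have hslit' : A 0 / (B 0 * (starRingEnd ℂ) (B 0)) ∈ Complex.slitPlane := by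
    rw [ha, hb]; exact hslit
  have hcpow := (Complex.hasStrictDerivAt_cpow_const (c := s) hslit').hasDerivAt.comp
    (0 : ℝ) hq
  have hzpow := (hasDerivAt_zpow (-ν) (B 0) (Or.inl (hb ▸ hb0))).comp (0 : ℝ) hB
  have hmul := hcpow.mul hzpow
  have hfun : (((fun z : ℂ => z ^ s) ∘ fun t => A t / (B t * (starRingEnd ℂ) (B t)))
      * ((fun z : ℂ => z ^ (-ν)) ∘ B))
      = fun t => (A t / (B t * (starRingEnd ℂ) (B t))) ^ s * B t ^ (-ν) := rfl
  rw [hfun] at hmul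
  have hq0 : a / (b * (starRingEnd ℂ) b) ≠ 0 := div_ne_zero ha0 (mul_ne_zero hb0 hcb0)
  refine hmul.congr_deriv ?_
  simp only [Function.comp_apply]
  rw [ha, hb, Complex.cpow_sub _ _ hq0, Complex.cpow_one, zpow_sub_one₀ hb0]
  set cb := (starRingEnd ℂ) b with hcb
  set cdb := (starRingEnd ℂ) db with hcdb
  set X := (a / (b * cb)) ^ s with hX
  set Y := b ^ (-ν) with hY
  push_cast
  field_simp
  ring

private lemma pKer_eq {n : ℕ} (ν : ℤ) (l : ℂ) (W U : Mat n) :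
    pKer n ν l W U = (((1 : Mat n) - W * Wᴴ).det /
        (((1 : Mat n) - W * Uᴴ).det * (starRingEnd ℂ) (((1 : Mat n) - W * Uᴴ).det)))
        ^ ((Complex.I * l + (n : ℂ) - (ν : ℂ)) / 2) * ((1 : Mat n) - W * Uᴴ).det ^ (-ν) := by
  unfold pKer
  congr 2
  rw [Complex.mul_conj]
  norm_cast
  rw [Complex.sq_norm]

private lemma hasDerivAt_pKer {n : ℕ} (ν : ℤ) (l : ℂ) {Z : Mat n}
    (hZ : ((1 : Mat n) - Z * Zᴴ).PosDef) {U : Mat n} (hU : U * Uᴴ = 1) (E : Mat n) :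
    HasDerivAt (fun t : ℝ => pKer n ν l (Z + t • E) U)
      (pKer n ν l Z U *
        (((Complex.I * l + (n : ℂ) - (ν : ℂ)) / 2) *
            ((((1 : Mat n) - Z * Zᴴ).adjugate * (-(E * Zᴴ + Z * Eᴴ))).trace
                / ((1 : Mat n) - Z * Zᴴ).det
              - (((1 : Mat n) - Z * Uᴴ).adjugate * (-(E * Uᴴ))).trace
                / ((1 : Mat n) - Z * Uᴴ).det
              - (starRingEnd ℂ) ((((1 : Mat n) - Z * Uᴴ).adjugate * (-(E * Uᴴ))).trace)
                / (starRingEnd ℂ) (((1 : Mat n) - Z * Uᴴ).det))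
          - (ν : ℂ) * ((((1 : Mat n) - Z * Uᴴ).adjugate * (-(E * Uᴴ))).trace
                / ((1 : Mat n) - Z * Uᴴ).det))) 0 := by
  have hdetpos := hZ.det_pos
  have ha0 : ((1 : Mat n) - Z * Zᴴ).det ≠ 0 := hdetpos.ne'
  have hb0 : ((1 : Mat n) - Z * Uᴴ).det ≠ 0 := det_ne_zero_aux hZ hU
  have haim := Complex.lt_def.mp hdetpos
  have hare : 0 < (((1 : Mat n) - Z * Zᴴ).det).re := by simpa using haim.1
  have haeq : ((1 : Mat n) - Z * Zᴴ).det = ((((1 : Mat n) - Z * Zᴴ).det.re : ℝ) : ℂ) := by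
    apply Complex.ext
    · simp
    · simpa using haim.2.symm
  have hslit : ((1 : Mat n) - Z * Zᴴ).det /
      (((1 : Mat n) - Z * Uᴴ).det * (starRingEnd ℂ) (((1 : Mat n) - Z * Uᴴ).det))
      ∈ Complex.slitPlane := by
    rw [Complex.mul_conj, haeq, ← Complex.ofReal_div]
    exact Complex.ofReal_mem_slitPlane.mpr
      (div_pos hare (Complex.normSq_pos.mpr hb0))
  have hmain := deriv_combo ((Complex.I * l + (n : ℂ) - (ν : ℂ)) / 2) ν
    (hasDerivAt_detA Z E) (hasDerivAt_detB Z E Uᴴ) (by simp) (by simp) ha0 hb0 hslit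
  have hfun : (fun t : ℝ => (((1 : Mat n) - (Z + t • E) * (Z + t • E)ᴴ).det /
        (((1 : Mat n) - (Z + t • E) * Uᴴ).det
          * (starRingEnd ℂ) (((1 : Mat n) - (Z + t • E) * Uᴴ).det)))
        ^ ((Complex.I * l + (n : ℂ) - (ν : ℂ)) / 2)
      * ((1 : Mat n) - (Z + t • E) * Uᴴ).det ^ (-ν))
      = fun t : ℝ => pKer n ν l (Z + t • E) U := by
    funext t
    rw [pKer_eq]
  rw [hfun] at hmain
  rw [pKer_eq]
  exact hmain

private lemma trace_single_mul {n : ℕ} (M : Mat n) (i j : Fin n) (c : ℂ) :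
    (Matrix.single i j c * M).trace = c * M j i := by
  rw [Matrix.trace]
  rw [Finset.sum_eq_single i (fun x _ hx => by
    simp [Matrix.diag, Matrix.single_mul_apply_of_ne, hx]) (by simp)]
  simp [Matrix.diag]

private lemma trace_mul_single_mul {n : ℕ} (A B : Mat n) (i j : Fin n) (c : ℂ) :
    (A * (Matrix.single i j c * B)).trace = c * (B * A) j i := by
  rw [Matrix.trace_mul_comm, Matrix.mul_assoc, trace_single_mul]

private lemma trace_mul_mul_single {n : ℕ} (A B : Mat n) (i j : Fin n) (c : ℂ) :
    (A * (B * Matrix.single i j c)).trace = c * (A * B) j i := by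
  rw [← Matrix.mul_assoc, Matrix.trace_mul_comm, trace_single_mul]

private lemma stdBasis_conjT {n : ℕ} (i j : Fin n) (c : ℂ) :
    (Matrix.single i j c)ᴴ = Matrix.single j i ((starRingEnd ℂ) c) := by
  ext a b
  simp only [Matrix.conjTranspose_apply, Matrix.single, Matrix.of_apply]
  rw [apply_ite star]
  simp [and_comm, eq_comm]

/-- The antiholomorphic derivative of the Poisson kernel:
`∂̄P_{λ,ν}(Z,U) = (iλ+n−ν)/2 · P_{λ,ν}(Z,U) ((I−UZ*)⁻¹U − (I−ZZ*)⁻¹Z)`. -/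
theorem statement9 (n : ℕ) (hn : 1 ≤ n) (ν : ℤ) (l : ℂ) (U : UG n)
    (Z : Mat n) (hZ : Z ∈ mBall n) (i j : Fin n) :
    wAnti n (fun W => pKer n ν l W (U : Mat n)) i j Z
      = ((Complex.I * l + (n : ℂ) - (ν : ℂ)) / 2) * pKer n ν l Z (U : Mat n) *
          (((1 : Mat n) - (U : Mat n) * Zᴴ)⁻¹ * (U : Mat n)
            - ((1 : Mat n) - Z * Zᴴ)⁻¹ * Z) i j := by
  have hZ' : ((1 : Mat n) - Z * Zᴴ).PosDef := hZ
  have hU : (U : Mat n) * (U : Mat n)ᴴ = 1 := by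
    have h2 := U.2
    rw [Matrix.mem_unitaryGroup_iff, Matrix.star_eq_conjTranspose] at h2
    exact h2
  have ha0 : ((1 : Mat n) - Z * Zᴴ).det ≠ 0 := hZ'.det_pos.ne'
  have hb0 : ((1 : Mat n) - Z * (U : Mat n)ᴴ).det ≠ 0 := det_ne_zero_aux hZ' hU
  have hcb0 : (starRingEnd ℂ) (((1 : Mat n) - Z * (U : Mat n)ᴴ).det) ≠ 0 := by
    simpa using hb0
  have hd1 := (hasDerivAt_pKer ν l hZ' hU (Matrix.single i j 1)).deriv
  have hd2 := (hasDerivAt_pKer ν l hZ' hU (Matrix.single i j Complex.I)).deriv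
  unfold wAnti
  rw [show dirDeriv n (fun W => pKer n ν l W (U : Mat n)) (Matrix.single i j 1) Z
    = _ from hd1]
  rw [show dirDeriv n (fun W => pKer n ν l W (U : Mat n))
    (Matrix.single i j Complex.I) Z = _ from hd2]
  have e1 : (((1 : Mat n) - Z * Zᴴ).adjugate * (-(Matrix.single i j 1 * Zᴴ
        + Z * (Matrix.single i j 1)ᴴ))).trace
      = -((Zᴴ * ((1 : Mat n) - Z * Zᴴ).adjugate) j i
          + (((1 : Mat n) - Z * Zᴴ).adjugate * Z) i j) := by
    rw [mul_neg, Matrix.trace_neg, mul_add, Matrix.trace_add, stdBasis_conjT, _root_.map_one,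
      trace_mul_single_mul, trace_mul_mul_single, one_mul, one_mul]
  have e2 : (((1 : Mat n) - Z * (U : Mat n)ᴴ).adjugate
        * (-(Matrix.single i j 1 * (U : Mat n)ᴴ))).trace
      = -(((U : Mat n)ᴴ * ((1 : Mat n) - Z * (U : Mat n)ᴴ).adjugate) j i) := by
    rw [mul_neg, Matrix.trace_neg, trace_mul_single_mul, one_mul]
  have e3 : (((1 : Mat n) - Z * Zᴴ).adjugate * (-(Matrix.single i j Complex.I * Zᴴ
        + Z * (Matrix.single i j Complex.I)ᴴ))).trace
      = -(Complex.I * (Zᴴ * ((1 : Mat n) - Z * Zᴴ).adjugate) j i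
          + (-Complex.I) * (((1 : Mat n) - Z * Zᴴ).adjugate * Z) i j) := by
    rw [mul_neg, Matrix.trace_neg, mul_add, Matrix.trace_add, stdBasis_conjT, Complex.conj_I,
      trace_mul_single_mul, trace_mul_mul_single]
  have e4 : (((1 : Mat n) - Z * (U : Mat n)ᴴ).adjugate
        * (-(Matrix.single i j Complex.I * (U : Mat n)ᴴ))).trace
      = -(Complex.I * (((U : Mat n)ᴴ * ((1 : Mat n) - Z * (U : Mat n)ᴴ).adjugate) j i)) := by
    rw [mul_neg, Matrix.trace_neg, trace_mul_single_mul]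
  rw [e1, e2, e3, e4]
  have hGentry : ((((1 : Mat n) - Z * Zᴴ)⁻¹) * Z) i j
      = (((1 : Mat n) - Z * Zᴴ).det)⁻¹ * ((((1 : Mat n) - Z * Zᴴ).adjugate * Z) i j) := by
    rw [Matrix.inv_def, Ring.inverse_eq_inv, Matrix.smul_mul, Matrix.smul_apply, smul_eq_mul]
  have hK : (1 : Mat n) - (U : Mat n) * Zᴴ = ((1 : Mat n) - Z * (U : Mat n)ᴴ)ᴴ := by
    rw [Matrix.conjTranspose_sub, Matrix.conjTranspose_one, Matrix.conjTranspose_mul,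
      Matrix.conjTranspose_conjTranspose]
  have hent : ((((1 : Mat n) - Z * (U : Mat n)ᴴ).adjugate)ᴴ * (U : Mat n)) i j
      = (starRingEnd ℂ) (((U : Mat n)ᴴ * ((1 : Mat n) - Z * (U : Mat n)ᴴ).adjugate) j i) := by
    simp only [Matrix.mul_apply, Matrix.conjTranspose_apply, map_sum, _root_.map_mul,
      Complex.star_def, Complex.conj_conj]
    exact Finset.sum_congr rfl fun k _ => by ring
  have hKentry : ((((1 : Mat n) - (U : Mat n) * Zᴴ)⁻¹) * (U : Mat n)) i j
      = ((starRingEnd ℂ) (((1 : Mat n) - Z * (U : Mat n)ᴴ).det))⁻¹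
        * (starRingEnd ℂ) (((U : Mat n)ᴴ * ((1 : Mat n) - Z * (U : Mat n)ᴴ).adjugate) j i) := by
    rw [hK, Matrix.inv_def, Ring.inverse_eq_inv, Matrix.det_conjTranspose,
      ← Matrix.adjugate_conjTranspose, Matrix.smul_mul, Matrix.smul_apply, smul_eq_mul, hent]
    rfl
  rw [Matrix.sub_apply, hGentry, hKentry]
  simp only [_root_.map_neg, _root_.map_add, _root_.map_mul, Complex.conj_I, Complex.star_def]
  set a := ((1 : Mat n) - Z * Zᴴ).det with hadef
  set b := ((1 : Mat n) - Z * (U : Mat n)ᴴ).det with hbdef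
  set cb := (starRingEnd ℂ) b with hcbdef
  set P := pKer n ν l Z (U : Mat n) with hPdef
  set p := (Zᴴ * ((1 : Mat n) - Z * Zᴴ).adjugate) j i with hpdef
  set q := (((1 : Mat n) - Z * Zᴴ).adjugate * Z) i j with hqdef
  set g := (((U : Mat n)ᴴ * ((1 : Mat n) - Z * (U : Mat n)ᴴ).adjugate) j i) with hgdef
  set cg := (starRingEnd ℂ) g with hcgdef
  set cp := (starRingEnd ℂ) p with hcpdef
  set cq := (starRingEnd ℂ) q with hcqdef
  have hI3 : Complex.I ^ 3 = -Complex.I := by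
    rw [pow_succ, Complex.I_sq]; ring
  field_simp
  ring_nf
  simp only [hI3, Complex.I_sq]
  ring


end
end

section
/- Let n ≥ 1, ν ∈ ℤ, λ ∈ ℂ, k ∈ ℤ, and 0 ≤ r < 1. Then (1/2π) ∫₀^{2π} (1−re^{iθ})^{−(iλ+n−ν)/2} (1−re^{−iθ})^{−(iλ+n+ν)/2} e^{ikθ} dθ = r^{|k|} · ( ((iλ+n+ε(k)ν)/2)_{|k|} / |k|! ) · ₂F₁( (iλ+n−ε(k)ν)/2, (iλ+n+ε(k)ν)/2 + |k| ; 1+|k| ; r² ), where ε(k) = 1 if k ≥ 0 and ε(k) = −1 if k < 0; equivalently, the integral equals (1−r²)^{−(iλ+n−ν)/2}·φ^ν_{λ,k}(r). -/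
open MeasureTheory Complex Matrix Filter
open scoped ENNReal Real ComplexOrder

noncomputable section

/-- The Pochhammer symbol `(a)_k = a(a+1)⋯(a+k−1)`. -/
def poch (a : ℂ) (k : ℕ) : ℂ := ∏ i ∈ Finset.range k, (a + (i : ℂ))

/-- The Gauss hypergeometric series `₂F₁(a,b;c;x)`. -/
def hyp2F1 (a b c x : ℂ) : ℂ :=
  ∑' k : ℕ, poch a k * poch b k / (poch c k * (Nat.factorial k : ℂ)) * x ^ k

/-- `ε(k) = 1` if `k ≥ 0`, `−1` if `k < 0`. -/
def epsZ (k : ℤ) : ℤ := if 0 ≤ k then 1 else -1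

/-- The radial function `φ^ν_{λ,k}(r)`. -/
def phiNu (n : ℕ) (ν : ℤ) (l : ℂ) (k : ℤ) (r : ℝ) : ℂ :=
  (r : ℂ) ^ k.natAbs * ((1 - (r : ℂ) ^ 2) ^ ((Complex.I * l + (n : ℂ) - (ν : ℂ)) / 2))
    * (poch ((Complex.I * l + (n : ℂ) + ((epsZ k * ν : ℤ) : ℂ)) / 2) k.natAbs
        / (Nat.factorial k.natAbs : ℂ))
    * hyp2F1 ((Complex.I * l + (n : ℂ) - ((epsZ k * ν : ℤ) : ℂ)) / 2)
        ((Complex.I * l + (n : ℂ) + ((epsZ k * ν : ℤ) : ℂ)) / 2 + (k.natAbs : ℂ))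
        (1 + (k.natAbs : ℂ)) ((r : ℂ) ^ 2)

/-- `d_m = ∏_{i<j} (1 + (m_i − m_j)/(j − i))`. -/
def dSig (n : ℕ) (m : Fin n → ℤ) : ℝ :=
  ∏ q ∈ Finset.univ.filter (fun q : Fin n × Fin n => q.1 < q.2),
    (1 + ((m q.1 - m q.2 : ℤ) : ℝ) / ((q.2 : ℕ) - (q.1 : ℕ) : ℝ))

/-- The generalized spherical function `Φ^ν_{λ,m}(r)`. -/
def PhiSph (n : ℕ) (ν : ℤ) (l : ℂ) (m : Fin n → ℤ) (r : ℝ) : ℂ :=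
  ((Nat.factorial n : ℂ) / (dSig n m : ℂ))
    * Matrix.det (Matrix.of fun i j : Fin n => phiNu n ν l (m i - (i : ℕ) + (j : ℕ)) r)

lemma poch_zero (a : ℂ) : poch a 0 = 1 := rfl

lemma poch_succ (a : ℂ) (n : ℕ) : poch a (n + 1) = poch a n * (a + n) :=
  Finset.prod_range_succ _ _

lemma poch_add (a : ℂ) (j m : ℕ) : poch a (j + m) = poch a j * poch (a + j) m := by
  unfold poch
  rw [Finset.prod_range_add]
  congr 1
  refine Finset.prod_congr rfl fun i _ => ?_
  push_cast; ring

lemma factorial_poch (j m : ℕ) :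
    ((j.factorial : ℂ)) * poch (1 + (j : ℂ)) m = ((j + m).factorial : ℂ) := by
  induction m with
  | zero => simp [poch_zero]
  | succ m ih =>
    rw [poch_succ, ← mul_assoc, ih]
    have : j + (m + 1) = (j + m) + 1 := rfl
    rw [this, Nat.factorial_succ]
    push_cast; ring

lemma poch_one_add_ne_zero (j m : ℕ) : poch (1 + (j : ℂ)) m ≠ 0 := by
  intro h
  have := factorial_poch j m
  rw [h, mul_zero] at this
  exact (Nat.cast_ne_zero.mpr (Nat.factorial_ne_zero _)).symm this

lemma event_ratio (C : ℝ) {ρ : ℝ} (hρ1 : ρ < 1) :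
    ∀ᶠ n : ℕ in atTop, 1 ≤ n ∧ (C + n) * ρ / n ≤ (1 + ρ) / 2 := by
  have h : Tendsto (fun n : ℕ => (C + n) * ρ / n) atTop (nhds ρ) := by
    have h0 : Tendsto (fun n : ℕ => C / (n : ℝ)) atTop (nhds 0) :=
      Tendsto.div_atTop (tendsto_const_nhds (x := C)) tendsto_natCast_atTop_atTop
    have h1 : Tendsto (fun n : ℕ => (C / (n : ℝ) + 1) * ρ) atTop (nhds ((0 + 1) * ρ)) :=
      Tendsto.mul_const ρ (h0.add (tendsto_const_nhds (x := (1 : ℝ))))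
    rw [zero_add, one_mul] at h1
    refine h1.congr' ?_
    filter_upwards [eventually_gt_atTop 0] with n hn
    have hn' : (n : ℝ) ≠ 0 := Nat.cast_ne_zero.mpr hn.ne'
    field_simp
  have h2 : ∀ᶠ n : ℕ in atTop, (C + n) * ρ / n ≤ (1 + ρ) / 2 :=
    h.eventually_le_const (by linarith)
  filter_upwards [h2, eventually_ge_atTop 1] with n h1 h2
  exact ⟨h2, h1⟩

lemma norm_poch_succ (a : ℂ) (n : ℕ) :
    ‖poch a (n + 1)‖ ≤ ‖poch a n‖ * (‖a‖ + n) := by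
  rw [poch_succ, norm_mul]
  have : ‖a + (n : ℂ)‖ ≤ ‖a‖ + n := by
    simpa using (norm_add_le a (n : ℂ))
  exact mul_le_mul_of_nonneg_left this (norm_nonneg _)

/-- Summability of the binomial series with norms. -/
lemma summable_S1 (a : ℂ) {ρ : ℝ} (hρ0 : 0 ≤ ρ) (hρ1 : ρ < 1) :
    Summable fun m : ℕ => ‖poch a m‖ * ρ ^ m / m.factorial := by
  refine summable_of_ratio_norm_eventually_le (r := (1 + ρ) / 2) (by linarith) ?_
  filter_upwards [event_ratio (‖a‖) hρ1] with n ⟨hn1, hn2⟩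
  have hfac : (0:ℝ) < n.factorial := by positivity
  have hn0 : (0:ℝ) < n := by exact_mod_cast hn1
  rw [Real.norm_of_nonneg (by positivity), Real.norm_of_nonneg (by positivity)]
  have key : ‖poch a (n+1)‖ * ρ ≤ ((1 + ρ) / 2) * (‖poch a n‖ * (n+1)) := by
    calc ‖poch a (n+1)‖ * ρ ≤ (‖poch a n‖ * (‖a‖ + n)) * ρ :=
          mul_le_mul_of_nonneg_right (norm_poch_succ a n) hρ0
    _ = ‖poch a n‖ * ((‖a‖ + n) * ρ) := by ring
    _ ≤ ‖poch a n‖ * (((1 + ρ) / 2) * n) := by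
        refine mul_le_mul_of_nonneg_left ?_ (norm_nonneg _)
        rw [div_le_iff₀ hn0] at hn2
        linarith [hn2]
    _ ≤ ((1 + ρ) / 2) * (‖poch a n‖ * (n+1)) := by
        have h1 : (0:ℝ) ≤ (1 + ρ)/2 := by linarith
        nlinarith [norm_nonneg (poch a n)]
  rw [Nat.factorial_succ]
  push_cast
  rw [div_le_iff₀ (by positivity), pow_succ]
  calc ‖poch a (n+1)‖ * (ρ ^ n * ρ) = (‖poch a (n+1)‖ * ρ) * ρ ^ n := by ring
  _ ≤ (((1 + ρ) / 2) * (‖poch a n‖ * (n+1))) * ρ ^ n :=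
      mul_le_mul_of_nonneg_right key (by positivity)
  _ = (1 + ρ) / 2 * (‖poch a n‖ * ρ ^ n / ↑n.factorial) * ((↑n + 1) * ↑n.factorial) := by
      field_simp

/-- Summability of the differentiated binomial series with norms. -/
lemma summable_S2 (a : ℂ) {ρ : ℝ} (hρ0 : 0 ≤ ρ) (hρ1 : ρ < 1) :
    Summable fun m : ℕ => ‖poch a m‖ * m * ρ ^ m / m.factorial := by
  refine summable_of_ratio_norm_eventually_le (r := (1 + ρ) / 2) (by linarith) ?_
  filter_upwards [event_ratio (‖a‖) hρ1] with n ⟨hn1, hn2⟩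
  have hfac : (0:ℝ) < n.factorial := by positivity
  have hn0 : (0:ℝ) < n := by exact_mod_cast hn1
  rw [Real.norm_of_nonneg (by positivity), Real.norm_of_nonneg (by positivity)]
  have key : ‖poch a (n+1)‖ * ρ ≤ ((1 + ρ) / 2) * (‖poch a n‖ * n) := by
    calc ‖poch a (n+1)‖ * ρ ≤ (‖poch a n‖ * (‖a‖ + n)) * ρ :=
          mul_le_mul_of_nonneg_right (norm_poch_succ a n) hρ0
    _ = ‖poch a n‖ * ((‖a‖ + n) * ρ) := by ring
    _ ≤ ‖poch a n‖ * (((1 + ρ) / 2) * n) := by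
        refine mul_le_mul_of_nonneg_left ?_ (norm_nonneg _)
        rw [div_le_iff₀ hn0] at hn2
        linarith [hn2]
    _ = ((1 + ρ) / 2) * (‖poch a n‖ * n) := by ring
  rw [Nat.factorial_succ]
  push_cast
  rw [div_le_iff₀ (by positivity), pow_succ]
  calc ‖poch a (n+1)‖ * (n+1) * (ρ ^ n * ρ) = (‖poch a (n+1)‖ * ρ) * ((n+1) * ρ ^ n) := by ring
  _ ≤ (((1 + ρ) / 2) * (‖poch a n‖ * n)) * ((n+1) * ρ ^ n) := by
      refine mul_le_mul_of_nonneg_right key (by positivity)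
  _ = (1 + ρ) / 2 * (‖poch a n‖ * ↑n * ρ ^ n / ↑n.factorial) * ((↑n + 1) * ↑n.factorial) := by
      field_simp

/-- The generalized binomial series: `(1-z)^(-a) = ∑ (a)_m / m! * z^m` for `|z| < 1`. -/
lemma hasSum_binom (a z : ℂ) (hz : ‖z‖ < 1) :
    HasSum (fun m : ℕ => poch a m / m.factorial * z ^ m) ((1 - z) ^ (-a)) := by
  set ρ : ℝ := (1 + ‖z‖) / 2 with hρ
  have habs : 0 ≤ ‖z‖ := norm_nonneg z
  have hρ0 : 0 < ρ := by rw [hρ]; linarith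
  have hρ1 : ρ < 1 := by rw [hρ]; linarith
  have hzρ : ‖z‖ < ρ := by rw [hρ]; linarith
  set t : Set ℂ := Metric.ball (0 : ℂ) ρ with ht
  have hmem : ∀ y ∈ t, ‖y‖ < ρ := by
    intro y hy
    simpa [Complex.dist_eq] using Metric.mem_ball.mp hy
  have hzt : z ∈ t := by rw [ht]; simp [Metric.mem_ball, Complex.dist_eq]; exact hzρ
  have h0t : (0:ℂ) ∈ t := Metric.mem_ball_self hρ0
  set g : ℕ → ℂ → ℂ := fun n y => poch a n / n.factorial * y ^ n with hg
  set g' : ℕ → ℂ → ℂ := fun n y => poch a n / n.factorial * (n * y ^ (n - 1)) with hg'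
  set u : ℕ → ℝ := fun n => (‖poch a n‖ * n * ρ ^ n / n.factorial) / ρ with hu
  have husum : Summable u := (summable_S2 a hρ0.le hρ1).div_const ρ
  have hderiv : ∀ n : ℕ, ∀ y : ℂ, HasDerivAt (g n) (g' n y) y := fun n y =>
    (hasDerivAt_pow n y).const_mul _
  have hbound : ∀ (n : ℕ), ∀ y ∈ t, ‖g' n y‖ ≤ u n := by
    intro n y hy
    have hyρ := hmem y hy
    have hy0 : 0 ≤ ‖y‖ := norm_nonneg y
    rcases n with - | m
    · simp only [hg', hu]
      simp
    · have e1 : ‖g' (m+1) y‖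
          = ‖poch a (m+1)‖ / ((m+1).factorial : ℝ) * (((m:ℝ)+1) * ‖y‖ ^ m) := by
        simp only [hg', Nat.add_sub_cancel]
        rw [norm_mul, norm_div, norm_mul, norm_pow]
        rw [Complex.norm_natCast, Complex.norm_natCast]
        push_cast
        rfl
      have hu1 : u (m+1) = ‖poch a (m+1)‖ * ((m:ℝ)+1) * ρ ^ (m+1) / ((m+1).factorial : ℝ) / ρ := by
        simp only [hu]
        push_cast
        ring
      rw [e1, hu1]
      have hpow : ‖y‖ ^ m ≤ ρ ^ m := pow_le_pow_left₀ hy0 hyρ.le m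
      have e2 : ‖poch a (m+1)‖ * ((m:ℝ)+1) * ρ ^ (m+1) / ((m+1).factorial : ℝ) / ρ
          = ‖poch a (m+1)‖ / ((m+1).factorial : ℝ) * (((m:ℝ)+1) * ρ ^ m) := by
        have hfac : (0:ℝ) < ((m+1).factorial : ℝ) := by positivity
        rw [pow_succ]
        field_simp
      rw [e2]
      refine mul_le_mul_of_nonneg_left ?_ (by positivity)
      exact mul_le_mul_of_nonneg_left hpow (by positivity)
  have hsum0 : Summable fun n => g n 0 := by
    refine summable_of_ne_finset_zero (s := {0}) ?_
    intro n hn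
    have hne : n ≠ 0 := by simpa using hn
    simp [hg, zero_pow hne]
  have hsummt : ∀ y : ℂ, ‖y‖ < 1 → Summable fun n => g n y := by
    intro y hy
    refine Summable.of_norm ?_
    refine (summable_S1 a (norm_nonneg y) hy).congr fun n => ?_
    simp only [hg, norm_mul, norm_div, norm_pow, Complex.norm_natCast]
    ring
  have hsumg' : ∀ y ∈ t, Summable fun n => g' n y := fun y hy =>
    Summable.of_norm_bounded husum fun n => hbound n y hy
  have hG : ∀ y ∈ t, HasDerivAt (fun w => ∑' n, g n w) (∑' n, g' n y) y := by
    intro y hy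
    exact hasDerivAt_tsum_of_isPreconnected husum Metric.isOpen_ball
      (convex_ball (0:ℂ) ρ).isPreconnected (fun n w _ => hderiv n w) hbound
      h0t hsum0 hy
  set G : ℂ → ℂ := fun w => ∑' n, g n w with hGdef
  have hfacne : ∀ n : ℕ, ((n.factorial : ℂ)) ≠ 0 :=
    fun n => Nat.cast_ne_zero.mpr (Nat.factorial_ne_zero n)
  -- the ODE : (1 - y) * D y = a * G y
  have hODE : ∀ y ∈ t, (1 - y) * (∑' n, g' n y) = a * G y := by
    intro y hy
    have hy1 : ‖y‖ < 1 := lt_trans (hmem y hy) hρ1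
    have hS : HasSum (fun n => g' n y) (∑' n, g' n y) := (hsumg' y hy).hasSum
    have hS1 : HasSum (fun n => g' (n + 1) y)
        ((∑' n, g' n y) - ∑ i ∈ Finset.range 1, g' i y) :=
      (hasSum_nat_add_iff' 1).mpr hS
    have hrange : ∑ i ∈ Finset.range 1, g' i y = 0 := by simp [hg']
    rw [hrange, sub_zero] at hS1
    have hshift : ∀ n : ℕ, g' (n + 1) y = poch a (n+1) / n.factorial * y ^ n := by
      intro n
      have hfac : (((n+1).factorial : ℂ)) = ((n:ℂ)+1) * n.factorial := by
        rw [Nat.factorial_succ]; push_cast; ring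
      have hne : ((n:ℂ) + 1) ≠ 0 := Nat.cast_add_one_ne_zero n
      have hf := hfacne n
      simp only [hg', Nat.add_sub_cancel, hfac]
      push_cast
      field_simp
    simp only [hshift] at hS1
    have hD2 : HasSum (fun n => y * (poch a (n+1) / n.factorial * y ^ n))
        (y * ∑' n, g' n y) := hS1.mul_left y
    set w : ℕ → ℂ := fun n => (n : ℂ) * (poch a n / n.factorial) * y ^ n with hw
    have hws : ∀ n : ℕ, y * (poch a (n+1) / n.factorial * y ^ n) = w (n+1) := by
      intro n
      simp only [hw]
      have hfac : (((n+1).factorial : ℂ)) = ((n:ℂ)+1) * n.factorial := by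
        rw [Nat.factorial_succ]; push_cast; ring
      have hne : ((n:ℂ) + 1) ≠ 0 := Nat.cast_add_one_ne_zero n
      have hf := hfacne n
      push_cast [hfac]
      field_simp
      ring
    simp only [hws] at hD2
    have hr0 : ∑ i ∈ Finset.range 1, w i = 0 := by simp [hw]
    have hD4 : HasSum w (y * ∑' n, g' n y) := by
      refine (hasSum_nat_add_iff' 1).mp ?_
      rw [hr0, sub_zero]
      exact hD2
    have hD5 := hS1.sub hD4
    have hterm : ∀ n : ℕ, poch a (n+1) / n.factorial * y ^ n - w n = a * g n y := by
      intro n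
      have hf := hfacne n
      simp only [hw, hg, poch_succ]
      field_simp
      ring
    simp only [hterm] at hD5
    have hD7 : HasSum (fun n => a * g n y) (a * G y) := (hsummt y hy1).hasSum.mul_left a
    have := hD5.unique hD7
    linear_combination this
  have hne1 : ∀ y : ℂ, ‖y‖ < 1 → (1 : ℂ) - y ≠ 0 := by
    intro y hy h
    rw [sub_eq_zero] at h
    rw [← h] at hy
    simp at hy
  -- F := G * (1 - ·)^a has zero derivative on t
  have hF : ∀ y ∈ t, HasDerivAt (fun v => G v * (1 - v) ^ a) 0 y := by
    intro y hy
    have hy1 : ‖y‖ < 1 := lt_trans (hmem y hy) hρ1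
    have hre : (1 - y) ∈ Complex.slitPlane := by
      left
      have h1 : y.re ≤ ‖y‖ := Complex.re_le_norm y
      simp only [Complex.sub_re, Complex.one_re]
      linarith
    have h1 : HasDerivAt (fun v : ℂ => 1 - v) (-1 : ℂ) y := by
      simpa using (hasDerivAt_id y).const_sub 1
    have hcp : HasDerivAt (fun v : ℂ => (1 - v) ^ a) (a * (1 - y) ^ (a - 1) * (-1)) y :=
      h1.cpow_const hre
    have hmul := (hG y hy).mul hcp
    have hsplit : (1 - y) ^ a = (1 - y) ^ (a - 1) * (1 - y) := by
      have h2 := Complex.cpow_add (a - 1) 1 (hne1 y hy1)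
      rw [Complex.cpow_one, sub_add_cancel] at h2
      exact h2
    refine hmul.congr_deriv ?_
    rw [hsplit]
    linear_combination ((1 - y) ^ (a - 1)) * (hODE y hy)
  have hconst : G z * (1 - z) ^ a = G 0 * (1 - 0) ^ a := by
    refine Convex.is_const_of_fderivWithin_eq_zero (𝕜 := ℂ) (convex_ball (0:ℂ) ρ)
      (fun y hy => ((hF y hy).differentiableAt.differentiableWithinAt)) ?_ hzt h0t
    intro y hy
    have hfd := (hasDerivAt_iff_hasFDerivAt.mp (hF y hy)).fderiv
    rw [fderivWithin_of_isOpen Metric.isOpen_ball hy, hfd]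
    ext v
    simp
  have hG0 : G 0 = 1 := by
    simp only [hGdef]
    rw [tsum_eq_single 0 ?_]
    · simp [hg, poch_zero]
    · intro n hn
      simp [hg, zero_pow hn]
  have hA : G z * (1 - z) ^ a = 1 := by
    rw [hconst, hG0]
    simp
  have hGz : G z = (1 - z) ^ (-a) := by
    rw [Complex.cpow_neg]
    refine eq_inv_of_mul_eq_one_left ?_
    linear_combination hA
  have hs := (hsummt z hz).hasSum
  rw [← hGz]
  simp only [hGdef, hg]
  simp only [hg] at hs
  exact hs

lemma circ (M : ℤ) :
    (∫ θ in (0:ℝ)..(2 * Real.pi), Complex.exp (Complex.I * M * θ))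
      = if M = 0 then ((2 * Real.pi : ℝ) : ℂ) else 0 := by
  rcases eq_or_ne M 0 with h | h
  · subst h
    simp
  · rw [if_neg h]
    have hc : Complex.I * M ≠ 0 := by
      simp [Complex.I_ne_zero, Complex.ext_iff]
      exact_mod_cast h
    rw [integral_exp_mul_complex hc]
    have h1 : Complex.I * M * ((2 * Real.pi : ℝ) : ℂ) = M * (2 * Real.pi * Complex.I) := by
      push_cast; ring
    rw [h1, Complex.exp_int_mul_two_pi_mul_I]
    simp

lemma abs_exp_I_mul_real (w : ℂ) (hw : w.im = 0) (θ : ℝ) :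
    ‖Complex.exp (Complex.I * w * (θ:ℂ))‖ = 1 := by
  rw [Complex.norm_exp]
  have h : (Complex.I * w * (θ:ℂ)).re = 0 := by
    simp [Complex.mul_re, Complex.mul_im, hw]
  rw [h, Real.exp_zero]

lemma abs_r_exp (r θ : ℝ) (hr : 0 ≤ r) (s : ℂ) (hs : s.im = 0) :
    ‖(r:ℂ) * Complex.exp (Complex.I * s * (θ:ℂ))‖ = r := by
  rw [norm_mul, abs_exp_I_mul_real s hs θ, Complex.norm_real, Real.norm_of_nonneg hr, mul_one]

/-- The key circle integral computation. -/
lemma key (a b : ℂ) (j : ℕ) {r : ℝ} (hr : 0 ≤ r) (hr1 : r < 1) :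
    (∫ θ in (0:ℝ)..(2 * Real.pi),
        (1 - (r:ℂ) * Complex.exp (Complex.I * (θ:ℂ))) ^ (-a)
          * (1 - (r:ℂ) * Complex.exp (-(Complex.I * (θ:ℂ)))) ^ (-b)
          * Complex.exp (Complex.I * (j:ℂ) * (θ:ℂ)))
      = ((2 * Real.pi : ℝ) : ℂ) * ((r:ℂ)^j * (poch b j / (j.factorial : ℂ))
          * hyp2F1 a (b + (j:ℂ)) (1 + (j:ℂ)) ((r:ℂ)^2)) := by
  have hfacne : ∀ n : ℕ, ((n.factorial : ℂ)) ≠ 0 :=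
    fun n => Nat.cast_ne_zero.mpr (Nat.factorial_ne_zero n)
  set C : ℕ × ℕ → ℂ := fun mp =>
    (poch a mp.1 / (mp.1.factorial : ℂ) * (r:ℂ)^mp.1)
      * (poch b mp.2 / (mp.2.factorial : ℂ) * (r:ℂ)^mp.2) with hC
  set T : ℕ × ℕ → ℝ → ℂ := fun mp θ =>
    C mp * Complex.exp (Complex.I * ((mp.1 : ℂ) - (mp.2 : ℂ) + (j:ℂ)) * (θ:ℂ)) with hT
  -- norm computations
  have hCnorm : ∀ mp : ℕ × ℕ, ‖C mp‖
      = (‖poch a mp.1‖ * r^mp.1 / mp.1.factorial) * (‖poch b mp.2‖ * r^mp.2 / mp.2.factorial) := by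
    intro mp
    simp only [hC, norm_mul, norm_div, norm_pow, Complex.norm_natCast,
      Complex.norm_real, Real.norm_of_nonneg hr]
    ring
  have himre : ∀ m p : ℕ, ((m : ℂ) - (p : ℂ) + (j:ℂ)).im = 0 := by
    intro m p; simp
  have hTnorm : ∀ (mp : ℕ × ℕ) (θ : ℝ), ‖T mp θ‖ = ‖C mp‖ := by
    intro mp θ
    rw [hT]
    simp only [norm_mul]
    rw [show ‖Complex.exp (Complex.I * ((mp.1 : ℂ) - (mp.2 : ℂ) + (j:ℂ)) * (θ:ℂ))‖
        = ‖Complex.exp (Complex.I * ((mp.1 : ℂ) - (mp.2 : ℂ) + (j:ℂ)) * (θ:ℂ))‖ from rfl,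
      abs_exp_I_mul_real _ (himre mp.1 mp.2) θ, mul_one]
  -- summability of the coefficient norms
  have hu1 : Summable fun m : ℕ => ‖poch a m‖ * r^m / m.factorial := summable_S1 a hr hr1
  have hu2 : Summable fun p : ℕ => ‖poch b p‖ * r^p / p.factorial := summable_S1 b hr hr1
  have hCsum : Summable fun mp : ℕ × ℕ => ‖C mp‖ := by
    refine Summable.congr (Summable.mul_of_nonneg hu1 hu2 ?_ ?_) ?_
    · intro m; positivity
    · intro p; positivity
    · intro mp; exact (hCnorm mp).symm
  -- pointwise expansion of the integrand
  have hpoint : ∀ θ : ℝ,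
      (1 - (r:ℂ) * Complex.exp (Complex.I * (θ:ℂ))) ^ (-a)
          * (1 - (r:ℂ) * Complex.exp (-(Complex.I * (θ:ℂ)))) ^ (-b)
          * Complex.exp (Complex.I * (j:ℂ) * (θ:ℂ))
        = ∑' mp : ℕ × ℕ, T mp θ := by
    intro θ
    have hz1 : ‖(r:ℂ) * Complex.exp (Complex.I * (θ:ℂ))‖ < 1 := by
      rw [show Complex.I * (θ:ℂ) = Complex.I * (1:ℂ) * (θ:ℂ) by ring,
        abs_r_exp r θ hr 1 (by simp)]
      exact hr1
    have hz2 : ‖(r:ℂ) * Complex.exp (-(Complex.I * (θ:ℂ)))‖ < 1 := by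
      rw [show -(Complex.I * (θ:ℂ)) = Complex.I * (-1:ℂ) * (θ:ℂ) by ring,
        abs_r_exp r θ hr (-1) (by simp)]
      exact hr1
    have hA := hasSum_binom a _ hz1
    have hB := hasSum_binom b _ hz2
    have hNA : Summable fun m : ℕ =>
        ‖poch a m / (m.factorial : ℂ) * ((r:ℂ) * Complex.exp (Complex.I * (θ:ℂ)))^m‖ := by
      refine hu1.congr fun m => ?_
      rw [norm_mul, norm_div, norm_pow, Complex.norm_natCast]
      rw [show ‖(r:ℂ) * Complex.exp (Complex.I * (θ:ℂ))‖
          = ‖(r:ℂ) * Complex.exp (Complex.I * (θ:ℂ))‖ from rfl]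
      rw [show Complex.I * (θ:ℂ) = Complex.I * (1:ℂ) * (θ:ℂ) by ring,
        abs_r_exp r θ hr 1 (by simp)]
      ring
    have hNB : Summable fun p : ℕ =>
        ‖poch b p / (p.factorial : ℂ) * ((r:ℂ) * Complex.exp (-(Complex.I * (θ:ℂ))))^p‖ := by
      refine hu2.congr fun p => ?_
      rw [norm_mul, norm_div, norm_pow, Complex.norm_natCast]
      rw [show ‖(r:ℂ) * Complex.exp (-(Complex.I * (θ:ℂ)))‖
          = ‖(r:ℂ) * Complex.exp (-(Complex.I * (θ:ℂ)))‖ from rfl]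
      rw [show -(Complex.I * (θ:ℂ)) = Complex.I * (-1:ℂ) * (θ:ℂ) by ring,
        abs_r_exp r θ hr (-1) (by simp)]
      ring
    rw [← hA.tsum_eq, ← hB.tsum_eq, tsum_mul_tsum_of_summable_norm hNA hNB, ← tsum_mul_right]
    refine tsum_congr fun mp => ?_
    rw [hT, hC]
    obtain ⟨m, p⟩ := mp
    simp only
    rw [mul_pow, mul_pow, ← Complex.exp_nat_mul, ← Complex.exp_nat_mul]
    rw [show Complex.I * ((m:ℂ) - (p:ℂ) + (j:ℂ)) * (θ:ℂ)
        = (m:ℂ) * (Complex.I * (θ:ℂ)) + ((p:ℂ) * (-(Complex.I * (θ:ℂ))) + Complex.I * (j:ℂ) * (θ:ℂ)) by ring,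
      Complex.exp_add, Complex.exp_add]
    ring
  -- measurability
  have hmeas : ∀ mp : ℕ × ℕ, AEStronglyMeasurable (T mp)
      (volume.restrict (Set.Ioc (0:ℝ) (2 * Real.pi))) := by
    intro mp
    refine Continuous.aestronglyMeasurable ?_
    rw [hT]
    fun_prop
  have h2pi : (0:ℝ) < 2 * Real.pi := by positivity
  -- the series of lintegrals is finite
  have hlint : ∑' mp : ℕ × ℕ, ∫⁻ θ in Set.Ioc (0:ℝ) (2 * Real.pi), ‖T mp θ‖₊ ∂volume ≠ ⊤ := by
    have heval : ∀ mp : ℕ × ℕ, (∫⁻ θ in Set.Ioc (0:ℝ) (2 * Real.pi), ‖T mp θ‖₊ ∂volume)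
        = ENNReal.ofReal (‖C mp‖ * (2 * Real.pi)) := by
      intro mp
      calc (∫⁻ θ in Set.Ioc (0:ℝ) (2 * Real.pi), ‖T mp θ‖₊ ∂volume)
          = ∫⁻ _ in Set.Ioc (0:ℝ) (2 * Real.pi), ENNReal.ofReal ‖C mp‖ ∂volume :=
            lintegral_congr fun θ => by rw [← hTnorm mp θ, ← coe_nnnorm, ENNReal.ofReal_coe_nnreal]
        _ = ENNReal.ofReal ‖C mp‖ * volume (Set.Ioc (0:ℝ) (2 * Real.pi)) := by
            rw [MeasureTheory.lintegral_const, Measure.restrict_apply MeasurableSet.univ,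
              Set.univ_inter]
        _ = ENNReal.ofReal (‖C mp‖ * (2 * Real.pi)) := by
            rw [Real.volume_Ioc, sub_zero, ← ENNReal.ofReal_mul (norm_nonneg _)]
    rw [tsum_congr heval,
      ← ENNReal.ofReal_tsum_of_nonneg (fun mp => by positivity) (hCsum.mul_right _)]
    exact ENNReal.ofReal_ne_top
  -- swap integral and sum
  have hswap : (∫ θ in (0:ℝ)..(2 * Real.pi),
        (1 - (r:ℂ) * Complex.exp (Complex.I * (θ:ℂ))) ^ (-a)
          * (1 - (r:ℂ) * Complex.exp (-(Complex.I * (θ:ℂ)))) ^ (-b)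
          * Complex.exp (Complex.I * (j:ℂ) * (θ:ℂ)))
      = ∑' mp : ℕ × ℕ, ∫ θ in Set.Ioc (0:ℝ) (2 * Real.pi), T mp θ ∂volume := by
    rw [intervalIntegral.integral_of_le h2pi.le]
    rw [MeasureTheory.integral_congr_ae (ae_of_all _ hpoint)]
    exact MeasureTheory.integral_tsum hmeas hlint
  -- evaluate each integral
  have hint : ∀ mp : ℕ × ℕ, (∫ θ in Set.Ioc (0:ℝ) (2 * Real.pi), T mp θ ∂volume)
      = C mp * (if ((mp.1:ℤ) - mp.2 + j) = 0 then ((2 * Real.pi : ℝ):ℂ) else 0) := by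
    intro mp
    rw [← intervalIntegral.integral_of_le h2pi.le]
    simp only [hT]
    rw [intervalIntegral.integral_const_mul]
    congr 1
    rw [show ((mp.1:ℂ) - (mp.2:ℂ) + (j:ℂ)) = (((mp.1:ℤ) - mp.2 + j : ℤ) : ℂ) by push_cast; ring]
    exact circ ((mp.1:ℤ) - mp.2 + j)
  rw [hswap, tsum_congr hint]
  -- collapse the double sum
  have hsum2 : Summable fun mp : ℕ × ℕ =>
      C mp * (if ((mp.1:ℤ) - mp.2 + j) = 0 then ((2 * Real.pi : ℝ):ℂ) else 0) := by
    refine Summable.of_norm_bounded (g := fun mp => ‖C mp‖ * (2 * Real.pi))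
      (hCsum.mul_right _) fun mp => ?_
    rw [norm_mul]
    refine mul_le_mul_of_nonneg_left ?_ (norm_nonneg _)
    split
    · rw [Complex.norm_real, Real.norm_of_nonneg h2pi.le]
    · rw [norm_zero]; positivity
  rw [Summable.tsum_prod hsum2]
  have hinner : ∀ m : ℕ,
      (∑' p : ℕ, C (m, p) * (if ((m:ℤ) - p + j) = 0 then ((2 * Real.pi : ℝ):ℂ) else 0))
        = C (m, m + j) * ((2 * Real.pi : ℝ):ℂ) := by
    intro m
    rw [tsum_eq_single (m + j) ?_]
    · rw [if_pos (by push_cast; ring)]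
    · intro p hp
      rw [if_neg (fun h => hp (by omega)), mul_zero]
  rw [tsum_congr hinner, tsum_mul_right, mul_comm]
  congr 1
  -- identify with the hypergeometric series
  rw [hyp2F1, ← tsum_mul_left]
  refine tsum_congr fun m => ?_
  have hfac2 : (((m + j).factorial : ℂ)) = (j.factorial : ℂ) * poch (1 + (j:ℂ)) m := by
    rw [add_comm m j, ← factorial_poch j m]
  have hpb : poch b (m + j) = poch b j * poch (b + (j:ℂ)) m := by
    rw [add_comm m j, poch_add]
  simp only [hC]
  rw [hpb, hfac2]
  have h1 := hfacne m
  have h2 := hfacne j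
  have h3 := poch_one_add_ne_zero j m
  field_simp
  ring

lemma exp_flip (s : ℂ) (hs : s.im = 0) (M : ℤ) (hM : (s:ℂ) = (M:ℂ)) (θ : ℝ) :
    Complex.exp (Complex.I * s * (((2 * Real.pi - θ : ℝ)):ℂ))
      = Complex.exp (Complex.I * (-s) * (θ:ℂ)) := by
  rw [show Complex.I * s * (((2 * Real.pi - θ : ℝ)):ℂ)
      = s * (2 * (Real.pi:ℂ) * Complex.I) + Complex.I * (-s) * (θ:ℂ) by push_cast; ring,
    Complex.exp_add, hM, Complex.exp_int_mul_two_pi_mul_I, one_mul]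

lemma flipInt (a b : ℂ) (k : ℤ) (hk : k < 0) (r : ℝ) :
    (∫ θ in (0:ℝ)..(2 * Real.pi),
        (1 - (r:ℂ) * Complex.exp (Complex.I * (θ:ℂ))) ^ (-a)
          * (1 - (r:ℂ) * Complex.exp (-(Complex.I * (θ:ℂ)))) ^ (-b)
          * Complex.exp (Complex.I * (k:ℂ) * (θ:ℂ)))
    = ∫ θ in (0:ℝ)..(2 * Real.pi),
        (1 - (r:ℂ) * Complex.exp (Complex.I * (θ:ℂ))) ^ (-b)
          * (1 - (r:ℂ) * Complex.exp (-(Complex.I * (θ:ℂ)))) ^ (-a)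
          * Complex.exp (Complex.I * ((k.natAbs:ℕ):ℂ) * (θ:ℂ)) := by
  have h := intervalIntegral.integral_comp_sub_left (a := (0:ℝ)) (b := 2 * Real.pi)
    (fun θ : ℝ =>
        (1 - (r:ℂ) * Complex.exp (Complex.I * (θ:ℂ))) ^ (-a)
          * (1 - (r:ℂ) * Complex.exp (-(Complex.I * (θ:ℂ)))) ^ (-b)
          * Complex.exp (Complex.I * (k:ℂ) * (θ:ℂ))) (2 * Real.pi)
  rw [sub_self, sub_zero] at h
  rw [← h]
  refine intervalIntegral.integral_congr fun θ _ => ?_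
  have e1 : Complex.exp (Complex.I * (((2 * Real.pi - θ : ℝ)):ℂ))
      = Complex.exp (-(Complex.I * (θ:ℂ))) := by
    have := exp_flip 1 (by simp) 1 (by simp) θ
    rw [show Complex.I * (1:ℂ) * (((2 * Real.pi - θ : ℝ)):ℂ)
        = Complex.I * (((2 * Real.pi - θ : ℝ)):ℂ) by ring] at this
    rw [this]
    ring_nf
  have e2 : Complex.exp (-(Complex.I * (((2 * Real.pi - θ : ℝ)):ℂ)))
      = Complex.exp (Complex.I * (θ:ℂ)) := by
    have := exp_flip (-1) (by simp) (-1) (by push_cast; ring) θ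
    rw [show Complex.I * (-1:ℂ) * (((2 * Real.pi - θ : ℝ)):ℂ)
        = -(Complex.I * (((2 * Real.pi - θ : ℝ)):ℂ)) by ring] at this
    rw [this]
    ring_nf
  have e3 : Complex.exp (Complex.I * (k:ℂ) * (((2 * Real.pi - θ : ℝ)):ℂ))
      = Complex.exp (Complex.I * ((k.natAbs:ℕ):ℂ) * (θ:ℂ)) := by
    have himk : ((k:ℂ)).im = 0 := by simp
    have := exp_flip (k:ℂ) himk k rfl θ
    rw [this]
    have hna : ((k.natAbs:ℕ):ℂ) = -(k:ℂ) := by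
      have h2 : ((k.natAbs : ℕ) : ℂ) = (((k.natAbs : ℤ)) : ℂ) :=
        (Int.cast_natCast k.natAbs).symm
      rw [h2, show ((k.natAbs:ℤ)) = -k by omega]
      push_cast
      ring
    rw [hna]
  rw [e1, e2, e3]
  ring

/-- The Hua-type circle integral: for `k ∈ ℤ`, `0 ≤ r < 1`,
`(1/2π)∫₀^{2π} (1−re^{iθ})^{−(iλ+n−ν)/2}(1−re^{−iθ})^{−(iλ+n+ν)/2} e^{ikθ} dθ
 = r^{|k|} ((iλ+n+ε(k)ν)/2)_{|k|}/|k|! · ₂F₁((iλ+n−ε(k)ν)/2, (iλ+n+ε(k)ν)/2+|k|; 1+|k|; r²)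
 = (1−r²)^{−(iλ+n−ν)/2} φ^ν_{λ,k}(r)`. -/
theorem statement10 (n : ℕ) (hn : 1 ≤ n) (ν : ℤ) (l : ℂ) (k : ℤ)
    (r : ℝ) (hr : 0 ≤ r) (hr1 : r < 1) :
    (1 / (2 * (Real.pi : ℂ))) * (∫ θ in (0 : ℝ)..(2 * Real.pi),
        (1 - (r : ℂ) * Complex.exp (Complex.I * (θ : ℂ)))
            ^ (-(Complex.I * l + (n : ℂ) - (ν : ℂ)) / 2)
          * (1 - (r : ℂ) * Complex.exp (-(Complex.I * (θ : ℂ))))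
            ^ (-(Complex.I * l + (n : ℂ) + (ν : ℂ)) / 2)
          * Complex.exp (Complex.I * (k : ℂ) * (θ : ℂ)))
      = (r : ℂ) ^ k.natAbs
          * (poch ((Complex.I * l + (n : ℂ) + ((epsZ k * ν : ℤ) : ℂ)) / 2) k.natAbs
              / (Nat.factorial k.natAbs : ℂ))
          * hyp2F1 ((Complex.I * l + (n : ℂ) - ((epsZ k * ν : ℤ) : ℂ)) / 2)
              ((Complex.I * l + (n : ℂ) + ((epsZ k * ν : ℤ) : ℂ)) / 2 + (k.natAbs : ℂ))
              (1 + (k.natAbs : ℂ)) ((r : ℂ) ^ 2) ∧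
    (1 / (2 * (Real.pi : ℂ))) * (∫ θ in (0 : ℝ)..(2 * Real.pi),
        (1 - (r : ℂ) * Complex.exp (Complex.I * (θ : ℂ)))
            ^ (-(Complex.I * l + (n : ℂ) - (ν : ℂ)) / 2)
          * (1 - (r : ℂ) * Complex.exp (-(Complex.I * (θ : ℂ))))
            ^ (-(Complex.I * l + (n : ℂ) + (ν : ℂ)) / 2)
          * Complex.exp (Complex.I * (k : ℂ) * (θ : ℂ)))
      = (1 - (r : ℂ) ^ 2) ^ (-(Complex.I * l + (n : ℂ) - (ν : ℂ)) / 2) * phiNu n ν l k r := by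
  have h2pine : (2 * (Real.pi : ℂ)) ≠ 0 := by
    simp [Real.pi_ne_zero]
  have hcoe : ((2 * Real.pi : ℝ) : ℂ) = 2 * (Real.pi : ℂ) := by push_cast; ring
  have h1 : (1 / (2 * (Real.pi : ℂ))) * (∫ θ in (0 : ℝ)..(2 * Real.pi),
        (1 - (r : ℂ) * Complex.exp (Complex.I * (θ : ℂ)))
            ^ (-(Complex.I * l + (n : ℂ) - (ν : ℂ)) / 2)
          * (1 - (r : ℂ) * Complex.exp (-(Complex.I * (θ : ℂ))))
            ^ (-(Complex.I * l + (n : ℂ) + (ν : ℂ)) / 2)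
          * Complex.exp (Complex.I * (k : ℂ) * (θ : ℂ)))
      = (r : ℂ) ^ k.natAbs
          * (poch ((Complex.I * l + (n : ℂ) + ((epsZ k * ν : ℤ) : ℂ)) / 2) k.natAbs
              / (Nat.factorial k.natAbs : ℂ))
          * hyp2F1 ((Complex.I * l + (n : ℂ) - ((epsZ k * ν : ℤ) : ℂ)) / 2)
              ((Complex.I * l + (n : ℂ) + ((epsZ k * ν : ℤ) : ℂ)) / 2 + (k.natAbs : ℂ))
              (1 + (k.natAbs : ℂ)) ((r : ℂ) ^ 2) := by
    rcases le_or_gt 0 k with hk | hk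
    · have heps : ((epsZ k * ν : ℤ) : ℂ) = (ν : ℂ) := by
        simp [epsZ, hk]
      have hj : ((k.natAbs : ℕ) : ℂ) = (k : ℂ) := by
        have h2 : ((k.natAbs : ℕ) : ℂ) = (((k.natAbs : ℤ)) : ℂ) :=
          (Int.cast_natCast k.natAbs).symm
        rw [h2, show ((k.natAbs:ℤ)) = k by omega]
      simp only [heps, neg_div, ← hj]
      rw [key ((Complex.I * l + (n:ℂ) - (ν:ℂ))/2) ((Complex.I * l + (n:ℂ) + (ν:ℂ))/2)
        k.natAbs hr hr1, hcoe, one_div, inv_mul_cancel_left₀ h2pine]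
    · have heps : ((epsZ k * ν : ℤ) : ℂ) = -(ν : ℂ) := by
        simp only [epsZ, if_neg (not_le.mpr hk)]
        push_cast
        ring
      have e1 : (Complex.I * l + (n:ℂ) + ((epsZ k * ν : ℤ):ℂ))/2
          = (Complex.I * l + (n:ℂ) - (ν:ℂ))/2 := by rw [heps]; ring_nf
      have e2 : (Complex.I * l + (n:ℂ) - ((epsZ k * ν : ℤ):ℂ))/2
          = (Complex.I * l + (n:ℂ) + (ν:ℂ))/2 := by rw [heps]; ring_nf
      simp only [e1, e2, neg_div]
      rw [flipInt ((Complex.I * l + (n:ℂ) - (ν:ℂ))/2) ((Complex.I * l + (n:ℂ) + (ν:ℂ))/2) k hk r]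
      rw [key ((Complex.I * l + (n:ℂ) + (ν:ℂ))/2) ((Complex.I * l + (n:ℂ) - (ν:ℂ))/2)
        k.natAbs hr hr1, hcoe, one_div, inv_mul_cancel_left₀ h2pine]
  refine ⟨h1, ?_⟩
  rw [h1, phiNu]
  have hbase : ((1:ℂ) - (r:ℂ)^2) ≠ 0 := by
    rw [show ((1:ℂ) - (r:ℂ)^2) = (((1 - r^2 : ℝ)):ℂ) by push_cast; ring]
    exact Complex.ofReal_ne_zero.mpr (by nlinarith)
  have hcpne : ((1:ℂ) - (r:ℂ)^2) ^ ((Complex.I * l + (n:ℂ) - (ν:ℂ))/2) ≠ 0 := by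
    rw [Ne, Complex.cpow_eq_zero_iff]
    tauto
  simp only [neg_div, Complex.cpow_neg]
  linear_combination (-( (r:ℂ)^k.natAbs
      * (poch ((Complex.I * l + (n:ℂ) + ((epsZ k * ν : ℤ):ℂ))/2) k.natAbs
          / (k.natAbs.factorial:ℂ))
      * hyp2F1 ((Complex.I * l + (n:ℂ) - ((epsZ k * ν : ℤ):ℂ))/2)
          ((Complex.I * l + (n:ℂ) + ((epsZ k * ν : ℤ):ℂ))/2 + (k.natAbs:ℂ))
          (1 + (k.natAbs:ℂ)) ((r:ℂ)^2)))
    * (inv_mul_cancel₀ hcpne)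

end
end
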